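/- arXiv:1910.12934 — 6 statements merged into one kernel-verified Lean document; each statement's English description precedes it below -/
import Mathlib

section
/- If an n×n real matrix A is tropical totally nonnegative (A ∈ TNtrop(ℝ)), then the matrix W := φ(A) satisfies the weak trapeze inequalities and the weak parallelogram inequalities. -/
open Finset

/-- Truncated predecessor in `Fin n` (1-indexed entry `i-1`). -/
def fpred {n : ℕ} (j : Fin n) : Fin n :=
  ⟨j.val - 1, Nat.lt_of_le_of_lt (Nat.sub_le _ _) j.isLt⟩

/-- `ψ(W)_{i,j}` is the tropical weight of the uppermost path from source `i`
to target `j` in the canonical planar network `G_n`. -/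
def psi (n : ℕ) (W : Matrix (Fin n) (Fin n) ℝ) : Matrix (Fin n) (Fin n) ℝ :=
  fun i j => if i ≤ j then ∑ t ∈ Finset.Icc i j, W i t else ∑ t ∈ Finset.Icc j i, W t j

/-- The map `φ`, inverse of `ψ`. -/
def phi (n : ℕ) (A : Matrix (Fin n) (Fin n) ℝ) : Matrix (Fin n) (Fin n) ℝ :=
  fun i j =>
    if i = j then A i j
    else if i < j then A i j - A i (fpred j)
    else A i j - A (fpred i) j

/-- Weak trapeze inequalities. -/
def WeakTrapeze (n : ℕ) (W : Matrix (Fin n) (Fin n) ℝ) : Prop :=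
  ∀ i : Fin n, 0 < i.val →
    W i (fpred i) + W (fpred i) (fpred i) + W (fpred i) i ≤ W i i

/-- Strict trapeze inequalities. -/
def StrictTrapeze (n : ℕ) (W : Matrix (Fin n) (Fin n) ℝ) : Prop :=
  ∀ i : Fin n, 0 < i.val →
    W i (fpred i) + W (fpred i) (fpred i) + W (fpred i) i < W i i

/-- Weak parallelogram inequalities. -/
def WeakPara (n : ℕ) (W : Matrix (Fin n) (Fin n) ℝ) : Prop :=
  ∀ i j : Fin n, ∀ _h : j.val + 2 ≤ i.val,
    W i j ≤ W i ⟨j.val + 1, by have := i.isLt; omega⟩ ∧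
    W j i ≤ W ⟨j.val + 1, by have := i.isLt; omega⟩ i

/-- Strict parallelogram inequalities. -/
def StrictPara (n : ℕ) (W : Matrix (Fin n) (Fin n) ℝ) : Prop :=
  ∀ i j : Fin n, ∀ _h : j.val + 2 ≤ i.val,
    W i j < W i ⟨j.val + 1, by have := i.isLt; omega⟩ ∧
    W j i < W ⟨j.val + 1, by have := i.isLt; omega⟩ i

/-- Maximum, over the permutations of sign `ε`, of the tropical weight of the
permutation in the `k × k` matrix `B` (computed in `WithBot ℝ`, the maximum over
the empty set being `⊥ = -∞`). -/
def tropPermSup (k : ℕ) (ε : ℤˣ) (B : Matrix (Fin k) (Fin k) (WithBot ℝ)) : WithBot ℝ :=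
  (Finset.univ.filter fun σ : Equiv.Perm (Fin k) => Equiv.Perm.sign σ = ε).sup
    fun σ => ∑ i, B i (σ i)

/-- Tropical total nonnegativity of a matrix over `ℝ ∪ {-∞}`. -/
def IsTropTN (n : ℕ) (A : Matrix (Fin n) (Fin n) (WithBot ℝ)) : Prop :=
  ∀ (k : ℕ) (r c : Fin k → Fin n), StrictMono r → StrictMono c →
    tropPermSup k (-1) (A.submatrix r c) ≤ tropPermSup k 1 (A.submatrix r c)

/-- Tropical total positivity of a real matrix. -/
def IsTropTP (n : ℕ) (A : Matrix (Fin n) (Fin n) ℝ) : Prop :=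
  ∀ (k : ℕ), 2 ≤ k → ∀ (r c : Fin k → Fin n), StrictMono r → StrictMono c →
    tropPermSup k (-1) ((A.map ((↑) : ℝ → WithBot ℝ)).submatrix r c) <
      tropPermSup k 1 ((A.map ((↑) : ℝ → WithBot ℝ)).submatrix r c)

/-- Max-plus matrix product. -/
def tropMul {l m p : ℕ} (A : Matrix (Fin l) (Fin m) (WithBot ℝ))
    (B : Matrix (Fin m) (Fin p) (WithBot ℝ)) : Matrix (Fin l) (Fin p) (WithBot ℝ) :=
  fun i j => Finset.univ.sup fun k => A i k + B k j

/-- Tropical identity matrix. -/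
def tropId (n : ℕ) : Matrix (Fin n) (Fin n) (WithBot ℝ) :=
  fun i j => if i = j then 0 else ⊥

/-- Tropical elementary Jacobi matrix `x_i(s)` (0-indexed: `s` in position `(i, i+1)`). -/
def xUp (n : ℕ) (i : ℕ) (s : ℝ) : Matrix (Fin n) (Fin n) (WithBot ℝ) :=
  fun a b => if a = b then 0 else if a.val = i ∧ b.val = i + 1 then (s : WithBot ℝ) else ⊥

/-- Tropical elementary Jacobi matrix `x̄_i(s)` (0-indexed: `s` in position `(i+1, i)`). -/
def xLow (n : ℕ) (i : ℕ) (s : ℝ) : Matrix (Fin n) (Fin n) (WithBot ℝ) :=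
  fun a b => if a = b then 0 else if a.val = i + 1 ∧ b.val = i then (s : WithBot ℝ) else ⊥

/-- Tropical elementary Jacobi matrix `x∘_i(s)` (0-indexed diagonal matrix,
`s` in position `(i, i)`). -/
def xDiag (n : ℕ) (i : ℕ) (s : ℝ) : Matrix (Fin n) (Fin n) (WithBot ℝ) :=
  fun a b => if a = b then (if a.val = i then (s : WithBot ℝ) else 0) else ⊥

/-- Entry of `W` looked up with natural-number (0-based) indices. -/
def wnat (n : ℕ) (W : Matrix (Fin n) (Fin n) ℝ) (a b : ℕ) : ℝ :=
  if h : a < n ∧ b < n then W ⟨a, h.1⟩ ⟨b, h.2⟩ else 0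

/-- The left part `L(W)` of the canonical planar network:
`L(W) = ⊙_{k=1}^{n−1} ⊙_{t=1}^{k} x̄_{n−k+t−1}(W_{n−k+t, t})` (1-indexed). -/
def Lmat (n : ℕ) (W : Matrix (Fin n) (Fin n) ℝ) : Matrix (Fin n) (Fin n) (WithBot ℝ) :=
  ((List.range (n - 1)).flatMap fun k => (List.range (k + 1)).map fun t =>
      xLow n (n - k + t - 2) (wnat n W (n - k + t - 1) t)).foldl tropMul (tropId n)

/-- The diagonal part `D(W) = x∘_1(W_{1,1}) ⊙ ⋯ ⊙ x∘_n(W_{n,n})` (1-indexed). -/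
def Dmat (n : ℕ) (W : Matrix (Fin n) (Fin n) ℝ) : Matrix (Fin n) (Fin n) (WithBot ℝ) :=
  ((List.range n).map fun i => xDiag n i (wnat n W i i)).foldl tropMul (tropId n)

/-- The tropical transfer matrix of the canonical totally connected planar
network `G_n` with weight matrix `W`: `T(W) = L(W) ⊙ D(W) ⊙ (L(Wᵀ))ᵀ`. -/
def Tmat (n : ℕ) (W : Matrix (Fin n) (Fin n) ℝ) : Matrix (Fin n) (Fin n) (WithBot ℝ) :=
  tropMul (tropMul (Lmat n W) (Dmat n W)) (Matrix.transpose (Lmat n W.transpose))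


lemma minor2_aux (n : ℕ) (A : Matrix (Fin n) (Fin n) ℝ)
    (hA : IsTropTN n (A.map ((↑) : ℝ → WithBot ℝ)))
    (i0 i1 j0 j1 : Fin n) (hi : i0 < i1) (hj : j0 < j1) :
    A i0 j1 + A i1 j0 ≤ A i0 j0 + A i1 j1 := by
  have hr : StrictMono ![i0, i1] := by
    intro a b hab
    fin_cases a <;> fin_cases b <;> simp_all
  have hc : StrictMono ![j0, j1] := by
    intro a b hab
    fin_cases a <;> fin_cases b <;> simp_all
  have h := hA 2 ![i0, i1] ![j0, j1] hr hc
  rw [tropPermSup, tropPermSup,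
    show (Finset.univ.filter fun σ : Equiv.Perm (Fin 2) => Equiv.Perm.sign σ = 1) = {1} by decide,
    show (Finset.univ.filter fun σ : Equiv.Perm (Fin 2) => Equiv.Perm.sign σ = -1)
      = {Equiv.swap 0 1} by decide] at h
  simp only [Finset.sup_singleton, Fin.sum_univ_two, Matrix.submatrix_apply,
    Matrix.map_apply, Equiv.Perm.one_apply, Equiv.swap_apply_left, Equiv.swap_apply_right,
    Matrix.cons_val_zero, Matrix.cons_val_one, Matrix.head_cons] at h
  rw [← WithBot.coe_add, ← WithBot.coe_add, WithBot.coe_le_coe] at h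
  linarith

/-- if `A` is tropical totally nonnegative with real entries,
then `φ(A)` satisfies the weak trapeze and parallelogram inequalities. -/
theorem phi_of_TN_weak_ineqs (n : ℕ) (A : Matrix (Fin n) (Fin n) ℝ)
    (hA : IsTropTN n (A.map ((↑) : ℝ → WithBot ℝ))) :
    WeakTrapeze n (phi n A) ∧ WeakPara n (phi n A) := by
  constructor
  · intro i hi
    set p := fpred i with hp
    have hpi : p < i := by
      simp only [hp, fpred, Fin.lt_def]; omega
    have hne1 : ¬ (i = p) := by exact fun h => absurd h (Fin.ne_of_gt hpi)
    have hne2 : ¬ (p = i) := fun h => absurd h (Fin.ne_of_lt hpi)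
    have hkey := minor2_aux n A hA p i p i hpi hpi
    have hfpredi : fpred i = p := hp.symm
    simp only [phi, if_neg hne1, if_neg (not_lt_of_ge hpi.le), if_neg hne2, if_pos hpi,
      if_pos rfl, hfpredi, ite_true]
    linarith
  · intro i j hij
    set j1 : Fin n := ⟨j.val + 1, by have := i.isLt; omega⟩ with hj1
    have hji : j < i := by rw [Fin.lt_def]; omega
    have hjj1 : j < j1 := by rw [Fin.lt_def]; simp [hj1]
    have hj1i : j1 < i := by rw [Fin.lt_def]; simp [hj1]; omega
    have hpi : fpred i < i := by simp only [fpred, Fin.lt_def]; omega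
    constructor
    · -- W i j ≤ W i j1, both lower triangular (i > j, i > j1)
      have hkey := minor2_aux n A hA (fpred i) i j j1 hpi hjj1
      simp only [phi, if_neg (Fin.ne_of_gt hji), if_neg (not_lt_of_ge hji.le),
        if_neg (Fin.ne_of_gt hj1i), if_neg (not_lt_of_ge hj1i.le)]
      linarith
    · -- W j i ≤ W j1 i, both upper triangular
      have hkey := minor2_aux n A hA j j1 (fpred i) i hjj1 hpi
      have hfj1 : fpred i = fpred i := rfl
      simp only [phi, if_neg (Fin.ne_of_lt hji), if_pos hji,
        if_neg (Fin.ne_of_lt hj1i), if_pos hj1i]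
      linarith
end

section
/- If an n×n real matrix A is tropical totally positive (A ∈ TPtrop), then the matrix W := φ(A) satisfies the strict trapeze inequalities and the strict parallelogram inequalities. -/
open Finset

lemma strictMono_pair {n : ℕ} {a b : Fin n} (hab : a < b) :
    StrictMono (![a, b] : Fin 2 → Fin n) := by
  intro i j hij
  fin_cases i <;> fin_cases j <;>
    simp only [Fin.mk_lt_mk, Matrix.cons_val_zero, Matrix.cons_val_one, Matrix.head_cons] at hij ⊢ <;>
    first | omega | exact hab

lemma key_minor (n : ℕ) (A : Matrix (Fin n) (Fin n) ℝ) (hA : IsTropTP n A)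
    {a b c d : Fin n} (hab : a < b) (hcd : c < d) :
    A a d + A b c < A a c + A b d := by
  have h := hA 2 le_rfl ![a, b] ![c, d] (strictMono_pair hab) (strictMono_pair hcd)
  have h1 : (Finset.univ.filter fun σ : Equiv.Perm (Fin 2) => Equiv.Perm.sign σ = 1) = {1} := by
    decide
  have h2 : (Finset.univ.filter fun σ : Equiv.Perm (Fin 2) => Equiv.Perm.sign σ = -1)
      = {Equiv.swap 0 1} := by decide
  rw [tropPermSup, tropPermSup, h1, h2, Finset.sup_singleton, Finset.sup_singleton] at h
  simp only [Fin.sum_univ_two, Matrix.submatrix_apply, Matrix.map_apply, Equiv.swap_apply_left,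
    Equiv.swap_apply_right, Equiv.Perm.one_apply] at h
  norm_num at h
  rw [← WithBot.coe_add, ← WithBot.coe_add, WithBot.coe_lt_coe] at h
  simpa using h

lemma phi_lt {n : ℕ} (A : Matrix (Fin n) (Fin n) ℝ) {i j : Fin n} (h : i < j) :
    phi n A i j = A i j - A i (fpred j) := by
  simp [phi, h, h.ne]

lemma phi_gt {n : ℕ} (A : Matrix (Fin n) (Fin n) ℝ) {i j : Fin n} (h : j < i) :
    phi n A i j = A i j - A (fpred i) j := by
  simp [phi, h.ne', not_lt.2 h.le]

lemma phi_diag {n : ℕ} (A : Matrix (Fin n) (Fin n) ℝ) (i : Fin n) :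
    phi n A i i = A i i := by simp [phi]

lemma fpred_lt {n : ℕ} {i : Fin n} (h : 0 < i.val) : fpred i < i := by
  simp only [fpred, Fin.lt_def]; omega

/-- if `A` is tropical totally positive, then `φ(A)` satisfies the
strict trapeze and parallelogram inequalities. -/
theorem phi_of_TP_strict_ineqs (n : ℕ) (A : Matrix (Fin n) (Fin n) ℝ)
    (hA : IsTropTP n A) :
    StrictTrapeze n (phi n A) ∧ StrictPara n (phi n A) := by
  constructor
  · intro i hi
    have hp : fpred i < i := fpred_lt hi
    rw [phi_gt A hp, phi_lt A hp, phi_diag, phi_diag]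
    have key := key_minor n A hA hp hp
    linarith
  · intro i j h
    have hj1 : (⟨j.val + 1, by have := i.isLt; omega⟩ : Fin n).val = j.val + 1 := rfl
    set j1 : Fin n := ⟨j.val + 1, by have := i.isLt; omega⟩ with hj1def
    have hjj1 : j < j1 := by simp [Fin.lt_def, j1]
    have hj1i : j1 < i := by simp only [Fin.lt_def, j1]; omega
    have hji : j < i := lt_trans hjj1 hj1i
    have hpi : fpred i < i := fpred_lt (by omega)
    have hj1p : j1 ≤ fpred i := by simp only [Fin.le_def, fpred, j1]; omega
    constructor
    · rw [phi_gt A hji, phi_gt A hj1i]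
      have key := key_minor n A hA hpi hjj1
      linarith
    · rw [phi_lt A hji, phi_lt A hj1i]
      have key := key_minor n A hA hjj1 hpi
      linarith
end

section
/- For every W ∈ Matrix (Fin n) (Fin n) ℝ, the following are equivalent: (i) W satisfies the weak trapeze inequalities and the weak parallelogram inequalities; (ii) the tropical transfer matrix T(W) equals ψ(W) entrywise (coercing the real entries of ψ(W) into ℝ ∪ {−∞}), i.e., every entry of the tropical transfer matrix is given by the weight of the corresponding uppermost path. -/
open Finset

namespace TropProof

open Finset

/-! ### Generic sup lemmas -/

lemma sup_single {n : ℕ} (f : Fin n → WithBot ℝ) (a : Fin n)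
    (h : ∀ k, k ≠ a → f k = ⊥) : univ.sup f = f a := by
  apply le_antisymm
  · exact Finset.sup_le fun k _ => by
      by_cases hk : k = a
      · subst hk; exact le_rfl
      · simp [h k hk]
  · exact Finset.le_sup (mem_univ a)

lemma sup_pair {n : ℕ} (f : Fin n → WithBot ℝ) (a b : Fin n)
    (h : ∀ k, k ≠ a → k ≠ b → f k = ⊥) : univ.sup f = f a ⊔ f b := by
  apply le_antisymm
  · exact Finset.sup_le fun k _ => by
      by_cases hk : k = a
      · subst hk; exact le_sup_left
      · by_cases hk' : k = b
        · subst hk'; exact le_sup_right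
        · simp [h k hk hk']
  · exact sup_le (Finset.le_sup (mem_univ a)) (Finset.le_sup (mem_univ b))

lemma wnat_fin {n : ℕ} (W : Matrix (Fin n) (Fin n) ℝ) (i j : Fin n) :
    wnat n W i j = W i j := by
  simp [wnat, i.isLt, j.isLt]

lemma wnat_transpose {n : ℕ} (W : Matrix (Fin n) (Fin n) ℝ) (a b : ℕ) :
    wnat n W.transpose a b = wnat n W b a := by
  unfold wnat
  by_cases ha : a < n <;> by_cases hb : b < n <;> simp [ha, hb, Matrix.transpose_apply]

/-! ### Elementary product lemmas -/

lemma tropMul_xLow {n : ℕ} (A : Matrix (Fin n) (Fin n) (WithBot ℝ)) (m : ℕ) (s : ℝ)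
    (i j : Fin n) :
    tropMul A (xLow n m s) i j =
      if h : (j : ℕ) = m ∧ m + 1 < n then A i j ⊔ (A i ⟨m + 1, h.2⟩ + (s : WithBot ℝ))
      else A i j := by
  unfold tropMul xLow
  split_ifs with h
  · obtain ⟨hj, hm⟩ := h
    rw [sup_pair _ j ⟨m + 1, hm⟩]
    · have hne : (⟨m + 1, hm⟩ : Fin n) ≠ j := by
        intro he
        have : m + 1 = (j : ℕ) := congrArg Fin.val he
        omega
      simp [hne, hj, Fin.ext_iff]
    · intro k hk hk'
      have h1 : ¬ (k = j) := hk
      have h2 : ¬ ((k : ℕ) = m + 1 ∧ (j : ℕ) = m) := by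
        intro ⟨h3, _⟩
        exact hk' (Fin.ext h3)
      simp [h1, h2]
  · rw [sup_single _ j]
    · simp
    · intro k hk
      have h2 : ¬ ((k : ℕ) = m + 1 ∧ (j : ℕ) = m) := by
        intro ⟨h3, h4⟩
        exact h ⟨h4, h3 ▸ k.isLt⟩
      simp [hk, h2]

lemma tropMul_xDiag {n : ℕ} (A : Matrix (Fin n) (Fin n) (WithBot ℝ)) (m : ℕ) (s : ℝ)
    (i j : Fin n) :
    tropMul A (xDiag n m s) i j = A i j + (if (j : ℕ) = m then (s : WithBot ℝ) else 0) := by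
  unfold tropMul xDiag
  rw [sup_single _ j]
  · simp
  · intro k hk
    simp [hk]

/-! ### Closed form for `Dmat` -/

lemma Dmat_apply {n : ℕ} (W : Matrix (Fin n) (Fin n) ℝ) (i j : Fin n) :
    Dmat n W i j = if i = j then ((W i i : ℝ) : WithBot ℝ) else ⊥ := by
  have key : ∀ m : ℕ, m ≤ n → ∀ i j : Fin n,
      ((List.range m).map fun t => xDiag n t (wnat n W t t)).foldl tropMul (tropId n) i j
        = if i = j then (if (i : ℕ) < m then ((W i i : ℝ) : WithBot ℝ) else 0) else ⊥ := by
    intro m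
    induction m with
    | zero => intro _ i j; simp [tropId]
    | succ m ih =>
      intro hm i j
      rw [List.range_succ, List.map_append, List.foldl_append]
      simp only [List.map_cons, List.map_nil, List.foldl_cons, List.foldl_nil]
      rw [tropMul_xDiag, ih (by omega)]
      by_cases hij : i = j
      · subst hij
        by_cases h1 : (i : ℕ) = m
        · subst h1
          simp [wnat_fin]
        · by_cases h2 : (i : ℕ) < m
          · have h3 : (i : ℕ) < m + 1 := by omega
            simp [h1, h2, h3]
          · have h3 : ¬ (i : ℕ) < m + 1 := by omega
            simp [h1, h2, h3]
      · simp [hij]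
  have := key n le_rfl i j
  unfold Dmat
  rw [this]
  simp [i.isLt]

lemma tropMul_Dmat {n : ℕ} (W : Matrix (Fin n) (Fin n) ℝ)
    (A : Matrix (Fin n) (Fin n) (WithBot ℝ)) (i k : Fin n) :
    tropMul A (Dmat n W) i k = A i k + ((W k k : ℝ) : WithBot ℝ) := by
  unfold tropMul
  rw [sup_single _ k]
  · rw [Dmat_apply]; simp
  · intro a ha
    rw [Dmat_apply]
    simp [ha]

lemma Tmat_entry {n : ℕ} (W : Matrix (Fin n) (Fin n) ℝ) (i j : Fin n) :
    Tmat n W i j =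
      univ.sup fun k => (Lmat n W i k + ((W k k : ℝ) : WithBot ℝ)) + Lmat n W.transpose j k := by
  have h0 : Tmat n W i j
      = univ.sup fun k => tropMul (Lmat n W) (Dmat n W) i k + (Lmat n W.transpose).transpose k j :=
    rfl
  rw [h0]
  congr 1
  funext k
  rw [tropMul_Dmat, Matrix.transpose_apply]

lemma Tmat_ge {n : ℕ} (W : Matrix (Fin n) (Fin n) ℝ) (i j k : Fin n) :
    (Lmat n W i k + ((W k k : ℝ) : WithBot ℝ)) + Lmat n W.transpose j k ≤ Tmat n W i j := by
  have h1 := Finset.le_sup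
    (f := fun k => (Lmat n W i k + ((W k k : ℝ) : WithBot ℝ)) + Lmat n W.transpose j k)
    (mem_univ k)
  rw [Tmat_entry]
  exact h1


/-! ### The column bound function and closed form matrices -/

def capb (n K T0 j : ℕ) : ℕ :=
  j + K + 1 + (if n ≤ j + K + 2 ∧ j + K + 2 < n + T0 then 1 else 0)

def colSum (n : ℕ) (W : Matrix (Fin n) (Fin n) ℝ) (a b c : ℕ) : ℝ :=
  ∑ m ∈ Finset.Ico a b, wnat n W (m + 1) c

def Fm (n : ℕ) (W : Matrix (Fin n) (Fin n) ℝ) (K T0 : ℕ) :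
    Matrix (Fin n) (Fin n) (WithBot ℝ) :=
  fun i j =>
    if (i : ℕ) = (j : ℕ) then 0
    else if (j : ℕ) < (i : ℕ) ∧ n ≤ capb n K T0 j then
      ((colSum n W j i (capb n K T0 j - n) : ℝ) : WithBot ℝ)
    else ⊥

def factorM (n : ℕ) (W : Matrix (Fin n) (Fin n) ℝ) (k t : ℕ) :
    Matrix (Fin n) (Fin n) (WithBot ℝ) :=
  xLow n (n - k + t - 2) (wnat n W (n - k + t - 1) t)

def Pm (n : ℕ) (W : Matrix (Fin n) (Fin n) ℝ) (K : ℕ) :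
    Matrix (Fin n) (Fin n) (WithBot ℝ) :=
  ((List.range K).flatMap fun k => (List.range (k + 1)).map fun t =>
    factorM n W k t).foldl tropMul (tropId n)

def Qm (n : ℕ) (W : Matrix (Fin n) (Fin n) ℝ) (K T0 : ℕ) :
    Matrix (Fin n) (Fin n) (WithBot ℝ) :=
  ((List.range T0).map fun t => factorM n W K t).foldl tropMul (Pm n W K)

lemma Lmat_eq_Pm {n : ℕ} (W : Matrix (Fin n) (Fin n) ℝ) : Lmat n W = Pm n W (n - 1) := rfl

lemma Pm_zero {n : ℕ} (W : Matrix (Fin n) (Fin n) ℝ) : Pm n W 0 = tropId n := rfl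

lemma Qm_zero {n : ℕ} (W : Matrix (Fin n) (Fin n) ℝ) (K : ℕ) : Qm n W K 0 = Pm n W K := rfl

lemma Qm_succ {n : ℕ} (W : Matrix (Fin n) (Fin n) ℝ) (K T0 : ℕ) :
    Qm n W K (T0 + 1) = tropMul (Qm n W K T0) (factorM n W K T0) := by
  unfold Qm
  rw [List.range_succ, List.map_append, List.foldl_append]
  rfl

lemma Pm_succ {n : ℕ} (W : Matrix (Fin n) (Fin n) ℝ) (K : ℕ) :
    Pm n W (K + 1) = Qm n W K (K + 1) := by
  conv_lhs => rw [Pm, List.range_succ, List.flatMap_append, List.foldl_append]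
  show List.foldl tropMul (Pm n W K)
    ([K].flatMap fun k => List.map (fun t => factorM n W k t) (List.range (k + 1))) = _
  simp [Qm]

/-! ### capb arithmetic -/

lemma capb_c1 {n K T0 m0 : ℕ} (hm : m0 + K + 2 = n + T0) :
    capb n K (T0 + 1) m0 = n + T0 := by
  unfold capb; split_ifs <;> omega

lemma capb_c2 {n K T0 m0 : ℕ} (hm : m0 + K + 2 = n + T0) :
    capb n K T0 m0 + 1 = n + T0 := by
  unfold capb; split_ifs <;> omega

lemma capb_c3 {n K T0 m0 : ℕ} (hm : m0 + K + 2 = n + T0) {j : ℕ} (hj : j ≠ m0) :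
    capb n K (T0 + 1) j = capb n K T0 j := by
  unfold capb; split_ifs <;> omega

lemma capb_c4 {n K T0 m0 : ℕ} (hm : m0 + K + 2 = n + T0) :
    capb n K T0 (m0 + 1) = n + T0 := by
  unfold capb; split_ifs <;> omega

lemma capb_T0_zero (n K j : ℕ) : capb n K 0 j = j + K + 1 := by
  unfold capb; split_ifs <;> omega

lemma capb_roll {n K j : ℕ} (hj : j + 1 < n) :
    capb n K (K + 1) j = capb n (K + 1) 0 j ∨
      (capb n K (K + 1) j < n ∧ capb n (K + 1) 0 j < n) := by
  unfold capb; split_ifs <;> omega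

/-! ### Fm entry lemmas -/

lemma Fm_diag {n : ℕ} (W : Matrix (Fin n) (Fin n) ℝ) (K T0 : ℕ) {i j : Fin n}
    (h : (i : ℕ) = (j : ℕ)) : Fm n W K T0 i j = 0 := by
  simp only [Fm, if_pos h]

lemma Fm_bot {n : ℕ} (W : Matrix (Fin n) (Fin n) ℝ) (K T0 : ℕ) {i j : Fin n}
    (h : (i : ℕ) ≠ (j : ℕ)) (h2 : ¬ ((j : ℕ) < (i : ℕ) ∧ n ≤ capb n K T0 j)) :
    Fm n W K T0 i j = ⊥ := by
  simp only [Fm, if_neg h, if_neg h2]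

lemma Fm_val {n : ℕ} (W : Matrix (Fin n) (Fin n) ℝ) (K T0 : ℕ) {i j : Fin n}
    (h : (j : ℕ) < (i : ℕ)) (h2 : n ≤ capb n K T0 j) :
    Fm n W K T0 i j = ((colSum n W j i (capb n K T0 j - n) : ℝ) : WithBot ℝ) := by
  simp only [Fm, if_neg (by omega : ¬ (i : ℕ) = (j : ℕ)), if_pos (And.intro h h2)]

lemma Fm_upper {n : ℕ} (W : Matrix (Fin n) (Fin n) ℝ) (K T0 : ℕ) {i j : Fin n}
    (h : (j : ℕ) ≤ (i : ℕ)) (h2 : n ≤ capb n K T0 j) :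
    Fm n W K T0 i j = ((colSum n W j i (capb n K T0 j - n) : ℝ) : WithBot ℝ) := by
  rcases eq_or_lt_of_le h with he | hl
  · rw [Fm_diag W K T0 he.symm]
    have : colSum n W j i (capb n K T0 j - n) = 0 := by
      unfold colSum
      rw [← he, Finset.Ico_self, Finset.sum_empty]
    rw [this]
    simp
  · exact Fm_val W K T0 hl h2

lemma Fm_zero {n : ℕ} (W : Matrix (Fin n) (Fin n) ℝ) : Fm n W 0 0 = tropId n := by
  funext i j
  unfold tropId
  by_cases h : (i : ℕ) = (j : ℕ)
  · rw [Fm_diag W 0 0 h, if_pos (Fin.ext h)]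
  · rw [Fm_bot W 0 0 h, if_neg (fun he => h (congrArg Fin.val he))]
    rw [capb_T0_zero]
    have := i.isLt
    omega

lemma Fm_roll {n : ℕ} (W : Matrix (Fin n) (Fin n) ℝ) {K : ℕ} (hK : K + 2 ≤ n) :
    Fm n W K (K + 1) = Fm n W (K + 1) 0 := by
  funext i j
  by_cases h : (i : ℕ) = (j : ℕ)
  · rw [Fm_diag W _ _ h, Fm_diag W _ _ h]
  · by_cases hji : (j : ℕ) < (i : ℕ)
    · have hj : (j : ℕ) + 1 < n := by have := i.isLt; omega
      rcases capb_roll (K := K) hj with he | ⟨h1, h2⟩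
      · simp only [Fm, he]
      · rw [Fm_bot W _ _ h (by omega), Fm_bot W _ _ h (by omega)]
    · rw [Fm_bot W _ _ h (by tauto), Fm_bot W _ _ h (by tauto)]

/-! ### colSum lemmas -/

lemma colSum_split {n : ℕ} (W : Matrix (Fin n) (Fin n) ℝ) {a b : ℕ} (c : ℕ) (h : a < b) :
    colSum n W a b c = wnat n W (a + 1) c + colSum n W (a + 1) b c := by
  unfold colSum
  rw [Finset.sum_eq_sum_Ico_succ_bot h]

lemma colSum_mono {n : ℕ} {W : Matrix (Fin n) (Fin n) ℝ}
    (hp : ∀ a b : ℕ, b + 2 ≤ a → a < n → wnat n W a b ≤ wnat n W a (b + 1))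
    {a b c : ℕ} (hca : c + 1 ≤ a) (hb : b < n) :
    colSum n W a b c ≤ colSum n W a b (c + 1) := by
  unfold colSum
  apply Finset.sum_le_sum
  intro m hm
  rw [Finset.mem_Ico] at hm
  exact hp (m + 1) c (by omega) (by omega)
lemma colSum_succ_self {n : ℕ} (W : Matrix (Fin n) (Fin n) ℝ) (a c : ℕ) :
    colSum n W a (a + 1) c = wnat n W (a + 1) c := by
  unfold colSum
  rw [Finset.sum_eq_sum_Ico_succ_bot (by omega), Finset.Ico_self, Finset.sum_empty, add_zero]

lemma colSum_self {n : ℕ} (W : Matrix (Fin n) (Fin n) ℝ) (a c : ℕ) :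
    colSum n W a a c = 0 := by
  unfold colSum
  rw [Finset.Ico_self, Finset.sum_empty]

/-- `Fm` entry lemmas specialized at a `Fin.mk` column index. -/
lemma Fm_mk_bot {n : ℕ} (W : Matrix (Fin n) (Fin n) ℝ) (K T0 : ℕ) {i : Fin n} {v : ℕ}
    (hv : v < n) (h : (i : ℕ) ≠ v) (h2 : ¬ (v < (i : ℕ) ∧ n ≤ capb n K T0 v)) :
    Fm n W K T0 i ⟨v, hv⟩ = ⊥ :=
  Fm_bot W K T0 h h2

lemma Fm_mk_upper {n : ℕ} (W : Matrix (Fin n) (Fin n) ℝ) (K T0 : ℕ) {i : Fin n} {v : ℕ}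
    (hv : v < n) (h : v ≤ (i : ℕ)) (h2 : n ≤ capb n K T0 v) :
    Fm n W K T0 i ⟨v, hv⟩ = ((colSum n W v i (capb n K T0 v - n) : ℝ) : WithBot ℝ) :=
  Fm_upper W K T0 h h2

/-! ### The key step lemmas -/

lemma step_eq {n : ℕ} {W : Matrix (Fin n) (Fin n) ℝ}
    (hp : ∀ a b : ℕ, b + 2 ≤ a → a < n → wnat n W a b ≤ wnat n W a (b + 1))
    {K T0 m0 : ℕ} (hm : m0 + K + 2 = n + T0) (hT : T0 ≤ K) (hK : K + 2 ≤ n) :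
    tropMul (Fm n W K T0) (xLow n m0 (wnat n W (m0 + 1) T0)) = Fm n W K (T0 + 1) := by
  have hm0n : m0 + 1 < n := by omega
  have hT0m0 : T0 ≤ m0 := by omega
  funext i j
  rw [tropMul_xLow]
  by_cases hj : (j : ℕ) = m0
  · rw [dif_pos (⟨hj, hm0n⟩ : (j : ℕ) = m0 ∧ m0 + 1 < n)]
    rcases lt_trichotomy (i : ℕ) m0 with hi | hi | hi
    · rw [Fm_bot W K T0 (by omega) (by omega), Fm_bot W K (T0+1) (by omega) (by omega),
        Fm_mk_bot W K T0 hm0n (by omega) (by omega)]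
      simp
    · rw [Fm_diag W K T0 (by omega), Fm_diag W K (T0+1) (by omega),
        Fm_mk_bot W K T0 hm0n (by omega) (by omega)]
      simp
    · -- i > m0
      have hcap1 : capb n K (T0+1) m0 = n + T0 := capb_c1 hm
      have hcap4 : capb n K T0 (m0 + 1) = n + T0 := capb_c4 hm
      have hcap2 : capb n K T0 m0 + 1 = n + T0 := capb_c2 hm
      have e2 : Fm n W K T0 i ⟨m0 + 1, hm0n⟩ = ((colSum n W (m0+1) i T0 : ℝ) : WithBot ℝ) := by
        rw [Fm_mk_upper W K T0 hm0n (by omega) (by omega), hcap4]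
        congr 2
        omega
      have eR : Fm n W K (T0+1) i j = ((colSum n W m0 i T0 : ℝ) : WithBot ℝ) := by
        rw [Fm_val W K (T0+1) (by omega) (by rw [hj, hcap1]; omega), hj, hcap1]
        congr 2
        omega
      rw [e2, eR, ← WithBot.coe_add]
      have eval : colSum n W (m0+1) (i:ℕ) T0 + wnat n W (m0+1) T0 = colSum n W m0 i T0 := by
        rw [colSum_split W T0 hi]; ring
      rw [eval, sup_eq_right]
      rcases Nat.eq_zero_or_pos T0 with hT0 | hT0
      · rw [Fm_bot W K T0 (by omega) (by rw [hj]; omega)]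
        exact bot_le
      · obtain ⟨T0', rfl⟩ : ∃ t, T0 = t + 1 := ⟨T0 - 1, by omega⟩
        rw [Fm_val W K (T0'+1) (by omega) (by rw [hj]; omega), hj,
          WithBot.coe_le_coe,
          show capb n K (T0'+1) m0 - n = T0' from by omega]
        exact colSum_mono hp (by omega) i.isLt
  · rw [dif_neg (fun hcon => hj hcon.1)]
    have ec : capb n K (T0+1) (j : ℕ) = capb n K T0 (j : ℕ) := capb_c3 hm hj
    simp only [Fm, ec]

lemma step_le {n : ℕ} {W : Matrix (Fin n) (Fin n) ℝ}
    {K T0 m0 : ℕ} (hm : m0 + K + 2 = n + T0) (hT : T0 ≤ K) (hK : K + 2 ≤ n)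
    (A : Matrix (Fin n) (Fin n) (WithBot ℝ)) (hA : ∀ i j, Fm n W K T0 i j ≤ A i j)
    (i j : Fin n) :
    Fm n W K (T0 + 1) i j ≤ tropMul A (xLow n m0 (wnat n W (m0 + 1) T0)) i j := by
  have hm0n : m0 + 1 < n := by omega
  rw [tropMul_xLow]
  by_cases hj : (j : ℕ) = m0
  · rw [dif_pos (⟨hj, hm0n⟩ : (j : ℕ) = m0 ∧ m0 + 1 < n)]
    rcases lt_trichotomy (i : ℕ) m0 with hi | hi | hi
    · rw [Fm_bot W K (T0+1) (by omega) (by omega)]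
      exact bot_le
    · rw [Fm_diag W K (T0+1) (by omega)]
      refine le_trans ?_ le_sup_left
      rw [← Fm_diag W K T0 (i := i) (j := j) (by omega)]
      exact hA i j
    · have hcap1 : capb n K (T0+1) m0 = n + T0 := capb_c1 hm
      have hcap4 : capb n K T0 (m0 + 1) = n + T0 := capb_c4 hm
      have eR : Fm n W K (T0+1) i j = ((colSum n W m0 i T0 : ℝ) : WithBot ℝ) := by
        rw [Fm_val W K (T0+1) (by omega) (by rw [hj, hcap1]; omega), hj, hcap1]
        congr 2
        omega
      have e2 : Fm n W K T0 i ⟨m0 + 1, hm0n⟩ = ((colSum n W (m0+1) i T0 : ℝ) : WithBot ℝ) := by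
        rw [Fm_mk_upper W K T0 hm0n (by omega) (by omega), hcap4]
        congr 2
        omega
      rw [eR]
      refine le_trans ?_ le_sup_right
      have eval : colSum n W m0 (i:ℕ) T0
          = colSum n W (m0+1) i T0 + wnat n W (m0+1) T0 := by
        rw [colSum_split W T0 hi]; ring
      rw [eval, WithBot.coe_add]
      exact add_le_add (e2 ▸ hA i ⟨m0 + 1, hm0n⟩) le_rfl
  · rw [dif_neg (fun hcon => hj hcon.1)]
    have ec : capb n K (T0+1) (j : ℕ) = capb n K T0 (j : ℕ) := capb_c3 hm hj
    refine le_trans ?_ (hA i j)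
    simp only [Fm, ec]
    exact le_rfl

/-! ### The second family of lower bounds -/

def I2bnd (n : ℕ) (W : Matrix (Fin n) (Fin n) ℝ) (K T0 : ℕ)
    (A : Matrix (Fin n) (Fin n) (WithBot ℝ)) : Prop :=
  ∀ i j : Fin n, (j : ℕ) + 1 ≤ (i : ℕ) → n + 1 ≤ capb n K T0 j →
    ((wnat n W i (capb n K T0 j - n - 1)
        + colSum n W j ((i : ℕ) - 1) (capb n K T0 j - n) : ℝ) : WithBot ℝ) ≤ A i j

lemma step_I2 {n : ℕ} {W : Matrix (Fin n) (Fin n) ℝ}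
    {K T0 m0 : ℕ} (hm : m0 + K + 2 = n + T0) (hT : T0 ≤ K) (hK : K + 2 ≤ n)
    (A : Matrix (Fin n) (Fin n) (WithBot ℝ)) (hA1 : ∀ i j, Fm n W K T0 i j ≤ A i j)
    (hA2 : I2bnd n W K T0 A) :
    I2bnd n W K (T0 + 1) (tropMul A (xLow n m0 (wnat n W (m0 + 1) T0))) := by
  have hm0n : m0 + 1 < n := by omega
  intro i j hji hc
  rw [tropMul_xLow]
  by_cases hj : (j : ℕ) = m0
  · rw [dif_pos (⟨hj, hm0n⟩ : (j : ℕ) = m0 ∧ m0 + 1 < n)]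
    have hcap1 : capb n K (T0+1) m0 = n + T0 := capb_c1 hm
    have hT0 : 1 ≤ T0 := by rw [hj, hcap1] at hc; omega
    obtain ⟨T0', rfl⟩ : ∃ t, T0 = t + 1 := ⟨T0 - 1, by omega⟩
    have hcap2 : capb n K (T0'+1) m0 + 1 = n + (T0'+1) := capb_c2 hm
    simp only [hj, hcap1, show n + (T0'+1) - n - 1 = T0' from by omega,
      show n + (T0'+1) - n = T0' + 1 from by omega, show T0' + 1 - 1 = T0' from rfl]
    by_cases hi : (i : ℕ) = m0 + 1
    · refine le_trans ?_ le_sup_left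
      refine le_trans ?_ (hA1 i j)
      rw [Fm_val W K (T0'+1) (by omega) (by rw [hj]; omega), hj,
        show capb n K (T0'+1) m0 - n = T0' from by omega,
        WithBot.coe_le_coe,
        show (i : ℕ) - 1 = m0 from by omega, colSum_self, add_zero, hi, colSum_succ_self]
    · have hi2 : m0 + 2 ≤ (i : ℕ) := by omega
      refine le_trans ?_ le_sup_right
      have hcap4 : capb n K (T0'+1) (m0+1) = n + (T0'+1) := capb_c4 hm
      have hb : ((wnat n W i (capb n K (T0'+1) (m0+1) - n - 1)
          + colSum n W (m0+1) ((i:ℕ) - 1) (capb n K (T0'+1) (m0+1) - n) : ℝ) : WithBot ℝ)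
          ≤ A i ⟨m0 + 1, hm0n⟩ :=
        hA2 i ⟨m0 + 1, hm0n⟩ (show m0 + 1 + 1 ≤ (i : ℕ) from by omega)
          (show n + 1 ≤ capb n K (T0'+1) (m0+1) from by rw [hcap4]; omega)
      rw [hcap4, show n + (T0'+1) - n - 1 = T0' from by omega,
        show n + (T0'+1) - n = T0' + 1 from by omega] at hb
      have eval : wnat n W i T0' + colSum n W m0 ((i:ℕ) - 1) (T0'+1)
          = (wnat n W i T0' + colSum n W (m0+1) ((i:ℕ) - 1) (T0'+1)) + wnat n W (m0+1) (T0'+1) := by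
        rw [colSum_split W (T0'+1) (show m0 < (i:ℕ) - 1 from by omega)]
        ring
      rw [eval, WithBot.coe_add]
      exact add_le_add hb le_rfl
  · rw [dif_neg (fun hcon => hj hcon.1)]
    have ec : capb n K (T0+1) (j : ℕ) = capb n K T0 (j : ℕ) := capb_c3 hm hj
    rw [ec] at hc ⊢
    exact hA2 i j hji hc

/-! ### Assembly of the three invariants -/

lemma factorM_eq {n : ℕ} (W : Matrix (Fin n) (Fin n) ℝ) {K T0 : ℕ} (hK : K + 2 ≤ n) (hT : T0 ≤ K) :
    factorM n W K T0 = xLow n (n - K + T0 - 2) (wnat n W ((n - K + T0 - 2) + 1) T0) := by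
  unfold factorM
  rw [show n - K + T0 - 1 = (n - K + T0 - 2) + 1 from by omega]

lemma Qm_eq_aux {n : ℕ} {W : Matrix (Fin n) (Fin n) ℝ}
    (hp : ∀ a b : ℕ, b + 2 ≤ a → a < n → wnat n W a b ≤ wnat n W a (b + 1))
    {K : ℕ} (hK : K + 2 ≤ n) (hbase : Pm n W K = Fm n W K 0) :
    ∀ T0, T0 ≤ K + 1 → Qm n W K T0 = Fm n W K T0 := by
  intro T0
  induction T0 with
  | zero => intro _; rw [Qm_zero]; exact hbase
  | succ T0 ih =>
    intro hT
    have hm : (n - K + T0 - 2) + K + 2 = n + T0 := by omega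
    rw [Qm_succ, ih (by omega), factorM_eq W hK (by omega), step_eq hp hm (by omega) hK]

lemma Pm_eq_Fm {n : ℕ} {W : Matrix (Fin n) (Fin n) ℝ}
    (hp : ∀ a b : ℕ, b + 2 ≤ a → a < n → wnat n W a b ≤ wnat n W a (b + 1)) :
    ∀ K, K + 1 ≤ n → Pm n W K = Fm n W K 0 := by
  intro K
  induction K with
  | zero => intro _; rw [Pm_zero, Fm_zero]
  | succ K ih =>
    intro hK
    rw [Pm_succ, Qm_eq_aux hp hK (ih (by omega)) (K+1) le_rfl, Fm_roll W hK]

lemma Lmat_eq_Fm {n : ℕ} {W : Matrix (Fin n) (Fin n) ℝ}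
    (hp : ∀ a b : ℕ, b + 2 ≤ a → a < n → wnat n W a b ≤ wnat n W a (b + 1))
    (hn : 1 ≤ n) : Lmat n W = Fm n W (n - 1) 0 := by
  rw [Lmat_eq_Pm]
  exact Pm_eq_Fm hp (n - 1) (by omega)

lemma Qm_le_aux {n : ℕ} {W : Matrix (Fin n) (Fin n) ℝ}
    {K : ℕ} (hK : K + 2 ≤ n) (hbase : ∀ i j, Fm n W K 0 i j ≤ Pm n W K i j) :
    ∀ T0, T0 ≤ K + 1 → ∀ i j, Fm n W K T0 i j ≤ Qm n W K T0 i j := by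
  intro T0
  induction T0 with
  | zero => intro _ i j; rw [Qm_zero]; exact hbase i j
  | succ T0 ih =>
    intro hT i j
    have hm : (n - K + T0 - 2) + K + 2 = n + T0 := by omega
    rw [Qm_succ, factorM_eq W hK (by omega)]
    exact step_le hm (by omega) hK _ (fun i j => ih (by omega) i j) i j

lemma Pm_ge_Fm {n : ℕ} {W : Matrix (Fin n) (Fin n) ℝ} :
    ∀ K, K + 1 ≤ n → ∀ i j, Fm n W K 0 i j ≤ Pm n W K i j := by
  intro K
  induction K with
  | zero => intro _ i j; rw [Pm_zero, Fm_zero]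
  | succ K ih =>
    intro hK i j
    rw [Pm_succ, ← Fm_roll W hK]
    exact Qm_le_aux hK (ih (by omega)) (K+1) le_rfl i j

lemma Lmat_ge_Fm {n : ℕ} {W : Matrix (Fin n) (Fin n) ℝ} (hn : 1 ≤ n) :
    ∀ i j, Fm n W (n - 1) 0 i j ≤ Lmat n W i j := by
  rw [Lmat_eq_Pm]
  exact Pm_ge_Fm (n - 1) (by omega)

lemma Qm_I2_aux {n : ℕ} {W : Matrix (Fin n) (Fin n) ℝ}
    {K : ℕ} (hK : K + 2 ≤ n) (hb1 : ∀ i j, Fm n W K 0 i j ≤ Pm n W K i j)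
    (hbase : I2bnd n W K 0 (Pm n W K)) :
    ∀ T0, T0 ≤ K + 1 → I2bnd n W K T0 (Qm n W K T0) := by
  intro T0
  induction T0 with
  | zero => intro _; rw [Qm_zero]; exact hbase
  | succ T0 ih =>
    intro hT
    have hm : (n - K + T0 - 2) + K + 2 = n + T0 := by omega
    rw [Qm_succ, factorM_eq W hK (by omega)]
    exact step_I2 hm (by omega) hK _ (Qm_le_aux hK hb1 T0 (by omega)) (ih (by omega))

lemma Pm_I2 {n : ℕ} {W : Matrix (Fin n) (Fin n) ℝ} :
    ∀ K, K + 1 ≤ n → I2bnd n W K 0 (Pm n W K) := by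
  intro K
  induction K with
  | zero =>
    intro _ i j hji hc
    rw [capb_T0_zero] at hc
    have := i.isLt
    omega
  | succ K ih =>
    intro hK
    have h2 := Qm_I2_aux hK (Pm_ge_Fm K (by omega)) (ih (by omega)) (K+1) le_rfl
    rw [Pm_succ]
    intro i j hji hc
    have hj1 : (j : ℕ) + 1 < n := by have := i.isLt; omega
    rcases capb_roll (K := K) hj1 with he | ⟨h1, h2'⟩
    · have h3 := h2 i j hji (by rw [he]; exact hc)
      rw [he] at h3
      exact h3
    · omega

lemma Lmat_I2 {n : ℕ} {W : Matrix (Fin n) (Fin n) ℝ} (hn : 1 ≤ n) :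
    I2bnd n W (n - 1) 0 (Lmat n W) := by
  rw [Lmat_eq_Pm]
  exact Pm_I2 (n - 1) (by omega)

lemma capb_last {n : ℕ} (hn : 1 ≤ n) (j : ℕ) : capb n (n - 1) 0 j = j + n := by
  rw [capb_T0_zero]; omega

/-! ### Conversions between `wnat` and `W`, hypotheses transfer -/

lemma wnat_eq {n : ℕ} (W : Matrix (Fin n) (Fin n) ℝ) {a b : ℕ} (ha : a < n) (hb : b < n) :
    wnat n W a b = W ⟨a, ha⟩ ⟨b, hb⟩ := by
  simp [wnat, ha, hb]

lemma hp_of_para {n : ℕ} {W : Matrix (Fin n) (Fin n) ℝ} (h : WeakPara n W) :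
    ∀ a b : ℕ, b + 2 ≤ a → a < n → wnat n W a b ≤ wnat n W a (b + 1) := by
  intro a b hba han
  have hb1 : b + 1 < n := by omega
  rw [wnat_eq W han (by omega), wnat_eq W han hb1]
  exact (h ⟨a, han⟩ ⟨b, by omega⟩ hba).1

lemma hpT_of_para {n : ℕ} {W : Matrix (Fin n) (Fin n) ℝ} (h : WeakPara n W) :
    ∀ a b : ℕ, b + 2 ≤ a → a < n →
      wnat n W.transpose a b ≤ wnat n W.transpose a (b + 1) := by
  intro a b hba han
  have hb1 : b + 1 < n := by omega
  rw [wnat_transpose, wnat_transpose, wnat_eq W (by omega) han, wnat_eq W hb1 han]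
  exact (h ⟨a, han⟩ ⟨b, by omega⟩ hba).2

lemma ht_of_trapeze {n : ℕ} {W : Matrix (Fin n) (Fin n) ℝ} (h : WeakTrapeze n W) :
    ∀ k : ℕ, k + 1 < n →
      wnat n W (k+1) k + wnat n W k k + wnat n W k (k+1) ≤ wnat n W (k+1) (k+1) := by
  intro k hk
  have := h ⟨k+1, hk⟩ (by exact Nat.succ_pos k)
  rw [wnat_eq W hk (by omega), wnat_eq W (by omega) (by omega),
    wnat_eq W (by omega) hk, wnat_eq W hk hk]
  exact this

/-! ### Sum reindexing helpers -/

lemma sum_shift (g : ℕ → ℝ) (a b : ℕ) :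
    ∑ m ∈ Finset.Ico a b, g (m + 1) = ∑ t ∈ Finset.Ico (a + 1) (b + 1), g t := by
  rw [Finset.sum_Ico_eq_sum_range, Finset.sum_Ico_eq_sum_range,
    show b + 1 - (a + 1) = b - a from by omega]
  exact Finset.sum_congr rfl fun k _ => by rw [show a + 1 + k = a + k + 1 from by omega]

lemma colSum_eq_Icc {n : ℕ} (W : Matrix (Fin n) (Fin n) ℝ) (c d e : ℕ) :
    colSum n W c d e = ∑ t ∈ Finset.Icc (c + 1) d, wnat n W t e := by
  unfold colSum
  rw [sum_shift (fun t => wnat n W t e) c d, Finset.Ico_add_one_right_eq_Icc]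

lemma sum_Icc_bot (g : ℕ → ℝ) {a b : ℕ} (h : a ≤ b) :
    ∑ t ∈ Finset.Icc a b, g t = g a + ∑ t ∈ Finset.Icc (a + 1) b, g t := by
  rw [← Finset.Ico_add_one_right_eq_Icc, Finset.sum_eq_sum_Ico_succ_bot (by omega), Finset.Ico_add_one_right_eq_Icc]

lemma sum_Icc_fin {n : ℕ} (a b : Fin n) (f : Fin n → ℝ) (g : ℕ → ℝ)
    (hg : ∀ t : Fin n, g t = f t) :
    ∑ t ∈ Finset.Icc a b, f t = ∑ t ∈ Finset.Icc (a : ℕ) (b : ℕ), g t := by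
  rw [← Fin.map_valEmbedding_Icc, Finset.sum_map]
  exact Finset.sum_congr rfl fun t _ => (hg t).symm

lemma psi_upper {n : ℕ} (W : Matrix (Fin n) (Fin n) ℝ) {i j : Fin n} (h : (i : ℕ) ≤ j) :
    psi n W i j = ∑ t ∈ Finset.Icc (i : ℕ) (j : ℕ), wnat n W i t := by
  unfold psi
  rw [if_pos (show i ≤ j from h)]
  exact sum_Icc_fin i j (fun t => W i t) (fun t => wnat n W i t) (fun t => wnat_fin W i t)

lemma psi_lower {n : ℕ} (W : Matrix (Fin n) (Fin n) ℝ) {i j : Fin n} (h : (j : ℕ) < i) :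
    psi n W i j = ∑ t ∈ Finset.Icc (j : ℕ) (i : ℕ), wnat n W t j := by
  unfold psi
  rw [if_neg (show ¬ i ≤ j from fun hc => absurd (show (i:ℕ) ≤ (j:ℕ) from hc) (by omega))]
  exact sum_Icc_fin j i (fun t => W t j) (fun t => wnat n W t j) (fun t => wnat_fin W t j)

/-! ### Lower bounds on `Lmat` entries -/

lemma Lmat_ge_diag {n : ℕ} {W : Matrix (Fin n) (Fin n) ℝ} (hn : 1 ≤ n) (i : Fin n) :
    (0 : WithBot ℝ) ≤ Lmat n W i i := by
  have h := Lmat_ge_Fm (W := W) hn i i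
  rwa [Fm_diag W _ _ rfl] at h

lemma Lmat_ge_col {n : ℕ} {W : Matrix (Fin n) (Fin n) ℝ} (hn : 1 ≤ n) (i j : Fin n)
    (h : (j : ℕ) ≤ i) :
    ((colSum n W j i j : ℝ) : WithBot ℝ) ≤ Lmat n W i j := by
  have h2 := Lmat_ge_Fm (W := W) hn i j
  rwa [Fm_upper W _ _ h (by rw [capb_last hn]; omega), capb_last hn,
    show (j:ℕ) + n - n = (j:ℕ) from by omega] at h2

lemma Lmat_ge_two {n : ℕ} {W : Matrix (Fin n) (Fin n) ℝ} (hn : 1 ≤ n) (i j : Fin n)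
    (h : (j : ℕ) + 1 ≤ i) (h1 : 1 ≤ (j : ℕ)) :
    ((wnat n W i ((j:ℕ) - 1) + colSum n W j ((i:ℕ) - 1) j : ℝ) : WithBot ℝ) ≤ Lmat n W i j := by
  have h2 := Lmat_I2 (W := W) hn i j h (by rw [capb_last hn]; omega)
  rwa [capb_last hn, show (j:ℕ) + n - n - 1 = (j:ℕ) - 1 from by omega,
    show (j:ℕ) + n - n = (j:ℕ) from by omega] at h2

/-! ### The forward direction -/

lemma Tmat_eq_psi {n : ℕ} {W : Matrix (Fin n) (Fin n) ℝ}
    (ht : WeakTrapeze n W) (hpar : WeakPara n W) (hn : 1 ≤ n) :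
    Tmat n W = (psi n W).map ((↑) : ℝ → WithBot ℝ) := by
  have hp := hp_of_para hpar
  have hpT := hpT_of_para hpar
  have htr := ht_of_trapeze ht
  funext i j
  set a := (i : ℕ) with ha
  set b := (j : ℕ) with hb
  set μ := min a b with hμ
  have hμa : μ ≤ a := min_le_left a b
  have hμb : μ ≤ b := min_le_right a b
  have hμn : μ < n := lt_of_le_of_lt hμa i.isLt
  set V : ℕ → ℝ := fun k => colSum n W k a k + wnat n W k k + colSum n W.transpose k b k
    with hV
  have hg : ∀ k : Fin n, ((Lmat n W i k + ((W k k : ℝ) : WithBot ℝ)) + Lmat n W.transpose j k)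
      = if (k : ℕ) ≤ μ then ((V k : ℝ) : WithBot ℝ) else ⊥ := by
    intro k
    by_cases hk : (k : ℕ) ≤ μ
    · rw [if_pos hk]
      have e1 : Lmat n W i k = ((colSum n W k a k : ℝ) : WithBot ℝ) := by
        rw [Lmat_eq_Fm hp hn, Fm_upper W _ _ (le_trans hk hμa)
          (by rw [capb_last hn]; omega), capb_last hn,
          show (k:ℕ) + n - n = (k:ℕ) from by omega]
      have e2 : Lmat n W.transpose j k = ((colSum n W.transpose k b k : ℝ) : WithBot ℝ) := by
        rw [Lmat_eq_Fm hpT hn, Fm_upper W.transpose _ _ (le_trans hk hμb)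
          (by rw [capb_last hn]; omega), capb_last hn,
          show (k:ℕ) + n - n = (k:ℕ) from by omega]
      rw [e1, e2, ← wnat_fin W k k, ← WithBot.coe_add, ← WithBot.coe_add]
    · rw [if_neg hk]
      rcases (by omega : a < (k:ℕ) ∨ b < (k:ℕ)) with hak | hbk
      · have e1 : Lmat n W i k = ⊥ := by
          rw [Lmat_eq_Fm hp hn, Fm_bot W _ _ (by omega) (by omega)]
        rw [e1]
        simp
      · have e2 : Lmat n W.transpose j k = ⊥ := by
          rw [Lmat_eq_Fm hpT hn, Fm_bot W.transpose _ _ (by omega) (by omega)]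
        rw [e2]
        simp
  have hmono : ∀ k, k + 1 ≤ μ → V k ≤ V (k + 1) := by
    intro k hk
    have hka : k < a := by omega
    have hkb : k < b := by omega
    have hs1 : colSum n W k a k = wnat n W (k+1) k + colSum n W (k+1) a k :=
      colSum_split W k hka
    have hs2 : colSum n W.transpose k b k
        = wnat n W.transpose (k+1) k + colSum n W.transpose (k+1) b k :=
      colSum_split W.transpose k hkb
    have hm1 : colSum n W (k+1) a k ≤ colSum n W (k+1) a (k+1) :=
      colSum_mono hp (by omega) i.isLt
    have hm2 : colSum n W.transpose (k+1) b k ≤ colSum n W.transpose (k+1) b (k+1) :=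
      colSum_mono hpT (by omega) j.isLt
    have htk := htr k (by omega)
    have hTe : wnat n W.transpose (k+1) k = wnat n W k (k+1) := wnat_transpose W (k+1) k
    simp only [hV]
    rw [hs1, hs2, hTe]
    linarith
  have hmono' : ∀ k, k ≤ μ → V k ≤ V μ := by
    have key : ∀ d k, k + d = μ → V k ≤ V μ := by
      intro d
      induction d with
      | zero => intro k hkd; rw [show k = μ from by omega]
      | succ d ihd =>
        intro k hkd
        exact le_trans (hmono k (by omega)) (ihd (k+1) (by omega))
    intro k hk
    exact key (μ - k) k (by omega)
  rw [Tmat_entry]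
  have hsup : (univ.sup fun k => (Lmat n W i k + ((W k k : ℝ) : WithBot ℝ))
      + Lmat n W.transpose j k) = ((V μ : ℝ) : WithBot ℝ) := by
    apply le_antisymm
    · apply Finset.sup_le
      intro k _
      rw [hg k]
      split_ifs with hk
      · exact WithBot.coe_le_coe.mpr (hmono' _ hk)
      · exact bot_le
    · have hle := Finset.le_sup (f := fun k => (Lmat n W i k + ((W k k : ℝ) : WithBot ℝ))
        + Lmat n W.transpose j k) (mem_univ (⟨μ, hμn⟩ : Fin n))
      have heq := hg ⟨μ, hμn⟩
      rw [if_pos (show ((⟨μ, hμn⟩ : Fin n) : ℕ) ≤ μ from le_rfl)] at heq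
      exact le_trans (le_of_eq heq.symm) hle
  rw [hsup, Matrix.map_apply]
  congr 1
  rcases le_or_gt a b with hab | hab
  · have hμ' : μ = a := by omega
    rw [hμ', psi_upper W (show (i:ℕ) ≤ (j:ℕ) from hab), ← ha, ← hb,
      sum_Icc_bot (fun t => wnat n W a t) hab]
    simp only [hV]
    rw [colSum_self, colSum_eq_Icc]
    rw [show (∑ t ∈ Finset.Icc (a+1) b, wnat n W.transpose t a)
        = ∑ t ∈ Finset.Icc (a+1) b, wnat n W a t from
      Finset.sum_congr rfl fun t _ => wnat_transpose W t a]
    ring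
  · have hμ' : μ = b := by omega
    rw [hμ', psi_lower W (show (j:ℕ) < (i:ℕ) from hab), ← ha, ← hb,
      sum_Icc_bot (fun t => wnat n W t b) (show b ≤ a from by omega)]
    simp only [hV]
    rw [colSum_self, colSum_eq_Icc]
    ring

/-! ### The reverse direction -/

lemma colSum_pred {n : ℕ} (W : Matrix (Fin n) (Fin n) ℝ) {a : ℕ} (h1 : 1 ≤ a) :
    colSum n W (a - 1) a (a - 1) = wnat n W a (a - 1) := by
  have h := colSum_succ_self W (a - 1) (a - 1)
  rwa [show a - 1 + 1 = a from by omega] at h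

lemma sum_Icc_top (g : ℕ → ℝ) {c d : ℕ} (h : c ≤ d) (h1 : 1 ≤ d) :
    ∑ t ∈ Finset.Icc c d, g t = ∑ t ∈ Finset.Icc c (d - 1), g t + g d := by
  have h2 := Finset.sum_Icc_succ_top (a := c) (b := d - 1) (by omega) g
  rwa [show d - 1 + 1 = d from by omega] at h2

lemma trapeze_of_T {n : ℕ} {W : Matrix (Fin n) (Fin n) ℝ} (hn : 1 ≤ n)
    (hT : Tmat n W = (psi n W).map ((↑) : ℝ → WithBot ℝ)) : WeakTrapeze n W := by
  intro i hi
  have ha1 : 1 ≤ (i : ℕ) := hi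
  have hpred : (fpred i : ℕ) = (i : ℕ) - 1 := rfl
  have h1 := Tmat_ge W i i (fpred i)
  have hL1 : ((wnat n W i ((i:ℕ) - 1) : ℝ) : WithBot ℝ) ≤ Lmat n W i (fpred i) := by
    have h2 := Lmat_ge_col (W := W) hn i (fpred i) (by rw [hpred]; omega)
    have e : colSum n W ((i:ℕ) - 1) (i:ℕ) ((i:ℕ) - 1) = wnat n W i ((i:ℕ) - 1) :=
      colSum_pred W ha1
    rw [← e]
    exact h2
  have hL3 : ((wnat n W ((i:ℕ) - 1) i : ℝ) : WithBot ℝ) ≤ Lmat n W.transpose i (fpred i) := by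
    have h2 := Lmat_ge_col (W := W.transpose) hn i (fpred i) (by rw [hpred]; omega)
    have e : colSum n W.transpose ((i:ℕ) - 1) (i:ℕ) ((i:ℕ) - 1)
        = wnat n W ((i:ℕ) - 1) i := by
      rw [colSum_pred W.transpose ha1, wnat_transpose]
    rw [← e]
    exact h2
  have hcomb : ((wnat n W i ((i:ℕ) - 1) + W (fpred i) (fpred i)
      + wnat n W ((i:ℕ) - 1) i : ℝ) : WithBot ℝ) ≤ Tmat n W i i := by
    calc ((wnat n W i ((i:ℕ) - 1) + W (fpred i) (fpred i)
          + wnat n W ((i:ℕ) - 1) i : ℝ) : WithBot ℝ)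
        = ((wnat n W i ((i:ℕ) - 1) : ℝ) + ((W (fpred i) (fpred i) : ℝ) : WithBot ℝ))
          + ((wnat n W ((i:ℕ) - 1) i : ℝ) : WithBot ℝ) := by
          rw [WithBot.coe_add, WithBot.coe_add]
      _ ≤ (Lmat n W i (fpred i) + ((W (fpred i) (fpred i) : ℝ) : WithBot ℝ))
          + Lmat n W.transpose i (fpred i) := add_le_add (add_le_add hL1 le_rfl) hL3
      _ ≤ Tmat n W i i := h1
  rw [hT, Matrix.map_apply, psi_upper W (le_refl (i : ℕ)), Finset.Icc_self,
    Finset.sum_singleton] at hcomb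
  have hr := WithBot.coe_le_coe.mp hcomb
  rw [wnat_eq W i.isLt (by omega), wnat_eq W (by omega) i.isLt,
    wnat_eq W i.isLt i.isLt] at hr
  exact hr

lemma para_of_T {n : ℕ} {W : Matrix (Fin n) (Fin n) ℝ} (hn : 1 ≤ n)
    (hT : Tmat n W = (psi n W).map ((↑) : ℝ → WithBot ℝ)) : WeakPara n W := by
  intro i j h
  have hb1n : (j : ℕ) + 1 < n := by have := i.isLt; omega
  set j1 : Fin n := ⟨(j : ℕ) + 1, hb1n⟩ with hj1
  have key1 : wnat n W i j ≤ wnat n W i ((j:ℕ) + 1) := by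
    have h1 := Tmat_ge W i j1 j1
    have hL1 : ((wnat n W i (j:ℕ) + colSum n W ((j:ℕ)+1) ((i:ℕ)-1) ((j:ℕ)+1) : ℝ) : WithBot ℝ)
        ≤ Lmat n W i j1 :=
      Lmat_ge_two (W := W) hn i j1 (show (j:ℕ)+1+1 ≤ (i:ℕ) from by omega)
        (show 1 ≤ (j:ℕ)+1 from by omega)
    have hL2 : (0 : WithBot ℝ) ≤ Lmat n W.transpose j1 j1 := Lmat_ge_diag hn j1
    have hcomb : ((wnat n W i (j:ℕ) + colSum n W ((j:ℕ)+1) ((i:ℕ)-1) ((j:ℕ)+1)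
        + W j1 j1 : ℝ) : WithBot ℝ) ≤ Tmat n W i j1 := by
      calc ((wnat n W i (j:ℕ) + colSum n W ((j:ℕ)+1) ((i:ℕ)-1) ((j:ℕ)+1)
            + W j1 j1 : ℝ) : WithBot ℝ)
          = (((wnat n W i (j:ℕ) + colSum n W ((j:ℕ)+1) ((i:ℕ)-1) ((j:ℕ)+1) : ℝ) : WithBot ℝ)
            + ((W j1 j1 : ℝ) : WithBot ℝ)) + 0 := by rw [WithBot.coe_add, add_zero]
        _ ≤ (Lmat n W i j1 + ((W j1 j1 : ℝ) : WithBot ℝ)) + Lmat n W.transpose j1 j1 :=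
            add_le_add (add_le_add hL1 le_rfl) hL2
        _ ≤ Tmat n W i j1 := h1
    rw [hT, Matrix.map_apply, psi_lower W (show (j1:ℕ) < (i:ℕ) from by
      rw [show (j1:ℕ) = (j:ℕ)+1 from rfl]; omega)] at hcomb
    have hr := WithBot.coe_le_coe.mp hcomb
    rw [show (j1:ℕ) = (j:ℕ)+1 from rfl] at hr
    have e1 : ∑ t ∈ Finset.Icc ((j:ℕ)+1) (i:ℕ), wnat n W t ((j:ℕ)+1)
        = ∑ t ∈ Finset.Icc ((j:ℕ)+1) ((i:ℕ)-1), wnat n W t ((j:ℕ)+1)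
          + wnat n W i ((j:ℕ)+1) :=
      sum_Icc_top _ (by omega) (by omega)
    have e2 : ∑ t ∈ Finset.Icc ((j:ℕ)+1) ((i:ℕ)-1), wnat n W t ((j:ℕ)+1)
        = wnat n W ((j:ℕ)+1) ((j:ℕ)+1)
          + ∑ t ∈ Finset.Icc ((j:ℕ)+1+1) ((i:ℕ)-1), wnat n W t ((j:ℕ)+1) :=
      sum_Icc_bot _ (by omega)
    have e3 : colSum n W ((j:ℕ)+1) ((i:ℕ)-1) ((j:ℕ)+1)
        = ∑ t ∈ Finset.Icc ((j:ℕ)+1+1) ((i:ℕ)-1), wnat n W t ((j:ℕ)+1) :=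
      colSum_eq_Icc W _ _ _
    have e4 : W j1 j1 = wnat n W ((j:ℕ)+1) ((j:ℕ)+1) := (wnat_eq W hb1n hb1n).symm
    linarith
  have key2 : wnat n W j i ≤ wnat n W ((j:ℕ)+1) i := by
    have h1 := Tmat_ge W j1 i j1
    have hL3 : ((wnat n W.transpose i (j:ℕ)
        + colSum n W.transpose ((j:ℕ)+1) ((i:ℕ)-1) ((j:ℕ)+1) : ℝ) : WithBot ℝ)
        ≤ Lmat n W.transpose i j1 :=
      Lmat_ge_two (W := W.transpose) hn i j1 (show (j:ℕ)+1+1 ≤ (i:ℕ) from by omega)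
        (show 1 ≤ (j:ℕ)+1 from by omega)
    have hL1 : (0 : WithBot ℝ) ≤ Lmat n W j1 j1 := Lmat_ge_diag hn j1
    have hcomb : ((W j1 j1 + (wnat n W.transpose i (j:ℕ)
        + colSum n W.transpose ((j:ℕ)+1) ((i:ℕ)-1) ((j:ℕ)+1)) : ℝ) : WithBot ℝ)
        ≤ Tmat n W j1 i := by
      calc ((W j1 j1 + (wnat n W.transpose i (j:ℕ)
            + colSum n W.transpose ((j:ℕ)+1) ((i:ℕ)-1) ((j:ℕ)+1)) : ℝ) : WithBot ℝ)
          = (0 + ((W j1 j1 : ℝ) : WithBot ℝ))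
            + ((wnat n W.transpose i (j:ℕ)
              + colSum n W.transpose ((j:ℕ)+1) ((i:ℕ)-1) ((j:ℕ)+1) : ℝ) : WithBot ℝ) := by
            rw [WithBot.coe_add, zero_add]
        _ ≤ (Lmat n W j1 j1 + ((W j1 j1 : ℝ) : WithBot ℝ)) + Lmat n W.transpose i j1 :=
            add_le_add (add_le_add hL1 le_rfl) hL3
        _ ≤ Tmat n W j1 i := h1
    rw [hT, Matrix.map_apply, psi_upper W (show (j1:ℕ) ≤ (i:ℕ) from by
      rw [show (j1:ℕ) = (j:ℕ)+1 from rfl]; omega)] at hcomb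
    have hr := WithBot.coe_le_coe.mp hcomb
    rw [show (j1:ℕ) = (j:ℕ)+1 from rfl] at hr
    have e1 : ∑ t ∈ Finset.Icc ((j:ℕ)+1) (i:ℕ), wnat n W ((j:ℕ)+1) t
        = ∑ t ∈ Finset.Icc ((j:ℕ)+1) ((i:ℕ)-1), wnat n W ((j:ℕ)+1) t
          + wnat n W ((j:ℕ)+1) i :=
      sum_Icc_top _ (by omega) (by omega)
    have e2 : ∑ t ∈ Finset.Icc ((j:ℕ)+1) ((i:ℕ)-1), wnat n W ((j:ℕ)+1) t
        = wnat n W ((j:ℕ)+1) ((j:ℕ)+1)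
          + ∑ t ∈ Finset.Icc ((j:ℕ)+1+1) ((i:ℕ)-1), wnat n W ((j:ℕ)+1) t :=
      sum_Icc_bot _ (by omega)
    have e3 : colSum n W.transpose ((j:ℕ)+1) ((i:ℕ)-1) ((j:ℕ)+1)
        = ∑ t ∈ Finset.Icc ((j:ℕ)+1+1) ((i:ℕ)-1), wnat n W ((j:ℕ)+1) t := by
      rw [colSum_eq_Icc W.transpose]
      exact Finset.sum_congr rfl fun t _ => wnat_transpose W t ((j:ℕ)+1)
    have e4 : W j1 j1 = wnat n W ((j:ℕ)+1) ((j:ℕ)+1) := (wnat_eq W hb1n hb1n).symm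
    have e5 : wnat n W.transpose i (j:ℕ) = wnat n W j i := wnat_transpose W (i:ℕ) (j:ℕ)
    linarith
  constructor
  · rw [wnat_eq W i.isLt j.isLt, wnat_eq W i.isLt hb1n] at key1
    exact key1
  · rw [wnat_eq W j.isLt i.isLt, wnat_eq W hb1n i.isLt] at key2
    exact key2

end TropProof

/-- `W` satisfies the weak trapeze and parallelogram inequalities
iff the tropical transfer matrix `T(W)` equals `ψ(W)` entrywise. -/
theorem weak_ineqs_iff_transfer_eq_psi (n : ℕ) (W : Matrix (Fin n) (Fin n) ℝ) :
    (WeakTrapeze n W ∧ WeakPara n W) ↔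
      Tmat n W = (psi n W).map ((↑) : ℝ → WithBot ℝ) := by
  rcases Nat.eq_zero_or_pos n with hn | hn
  · subst hn
    constructor
    · intro _
      funext i j
      exact i.elim0
    · intro _
      exact ⟨fun i => i.elim0, fun i => i.elim0⟩
  · constructor
    · rintro ⟨h1, h2⟩
      exact TropProof.Tmat_eq_psi h1 h2 hn
    · intro hT
      exact ⟨TropProof.trapeze_of_T hn hT, TropProof.para_of_T hn hT⟩
end

section
/- If W ∈ Matrix (Fin n) (Fin n) ℝ satisfies the strict trapeze inequalities and the strict parallelogram inequalities, then the tropical transfer matrix T(W) has all entries real and is tropical totally positive (T(W) ∈ TPtrop). -/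
open Finset

/-! ### Auxiliary machinery -/

namespace TropAux

variable {n : ℕ} {W : Matrix (Fin n) (Fin n) ℝ}

lemma wnat_eq (a b : ℕ) (ha : a < n) (hb : b < n) : wnat n W a b = W ⟨a, ha⟩ ⟨b, hb⟩ := by
  simp [wnat, ha, hb]

/-- `psi` in nat coordinates. -/
def Gf (n : ℕ) (W : Matrix (Fin n) (Fin n) ℝ) (a b : ℕ) : ℝ :=
  if a ≤ b then ∑ t ∈ Finset.Icc a b, wnat n W a t else ∑ t ∈ Finset.Icc b a, wnat n W t b

lemma sum_Icc_bot (f : ℕ → ℝ) (a b : ℕ) (h : a ≤ b) :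
    ∑ x ∈ Finset.Icc a b, f x = f a + ∑ x ∈ Finset.Icc (a+1) b, f x := by
  have e : Finset.Icc a b = insert a (Finset.Icc (a+1) b) := by
    ext x; simp only [Finset.mem_Icc, Finset.mem_insert]; omega
  rw [e, Finset.sum_insert (by simp)]

lemma psi_eq_Gf (i j : Fin n) : psi n W i j = Gf n W i.val j.val := by
  unfold psi Gf
  by_cases h : i ≤ j
  · rw [if_pos h, if_pos (show i.val ≤ j.val from h)]
    rw [← Fin.map_valEmbedding_Icc, Finset.sum_map]
    refine Finset.sum_congr rfl fun t _ => ?_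
    simp [wnat, i.isLt, t.isLt]
  · rw [if_neg h, if_neg (show ¬ i.val ≤ j.val from h)]
    rw [← Fin.map_valEmbedding_Icc, Finset.sum_map]
    refine Finset.sum_congr rfl fun t _ => ?_
    simp [wnat, j.isLt, t.isLt]

lemma para_nat (hP : StrictPara n W) (a b : ℕ) (h : b + 2 ≤ a) (ha : a < n) :
    wnat n W a b < wnat n W a (b+1) ∧ wnat n W b a < wnat n W (b+1) a := by
  have hb : b < n := by omega
  have := hP ⟨a, ha⟩ ⟨b, hb⟩ h
  constructor
  · rw [wnat_eq a b ha hb, wnat_eq a (b+1) ha (by omega)]; exact this.1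
  · rw [wnat_eq b a hb ha, wnat_eq (b+1) a (by omega) ha]; exact this.2

lemma trap_nat (hT : StrictTrapeze n W) (p : ℕ) (h : p + 1 < n) :
    wnat n W p p + wnat n W (p+1) p + wnat n W p (p+1) < wnat n W (p+1) (p+1) := by
  have hp : p < n := by omega
  have := hT ⟨p+1, h⟩ (by simp)
  have hfp : fpred (⟨p+1, h⟩ : Fin n) = ⟨p, hp⟩ := by simp [fpred]
  rw [hfp] at this
  rw [wnat_eq p p hp hp, wnat_eq (p+1) p h hp, wnat_eq p (p+1) hp h,
    wnat_eq (p+1) (p+1) h h]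
  linarith

/-- adjacent strict supermodularity of `Gf` -/
lemma adj (hT : StrictTrapeze n W) (hP : StrictPara n W) (p q : ℕ)
    (hp : p + 1 < n) (hq : q + 1 < n) :
    Gf n W p (q+1) + Gf n W (p+1) q < Gf n W p q + Gf n W (p+1) (q+1) := by
  rcases lt_trichotomy p q with h | h | h
  · have e1 : Gf n W p (q+1) = Gf n W p q + wnat n W p (q+1) := by
      unfold Gf; rw [if_pos (by omega), if_pos (by omega),
        Finset.sum_Icc_succ_top (by omega : p ≤ q + 1)]
    have e2 : Gf n W (p+1) (q+1) = Gf n W (p+1) q + wnat n W (p+1) (q+1) := by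
      unfold Gf; rw [if_pos (by omega), if_pos (by omega),
        Finset.sum_Icc_succ_top (by omega : p + 1 ≤ q + 1)]
    have hpara := (para_nat hP (q+1) p (by omega) hq).2
    linarith
  · subst h
    have e1 : Gf n W p (p+1) = wnat n W p p + wnat n W p (p+1) := by
      unfold Gf; rw [if_pos (by omega), Finset.sum_Icc_succ_top (by omega : p ≤ p + 1)]
      simp
    have e2 : Gf n W (p+1) p = wnat n W p p + wnat n W (p+1) p := by
      unfold Gf; rw [if_neg (by omega), Finset.sum_Icc_succ_top (by omega : p ≤ p + 1)]
      simp [add_comm]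
    have e3 : Gf n W p p = wnat n W p p := by unfold Gf; simp
    have e4 : Gf n W (p+1) (p+1) = wnat n W (p+1) (p+1) := by unfold Gf; simp
    have := trap_nat hT p hp
    rw [e1, e2, e3, e4]; linarith
  · have e1 : Gf n W (p+1) q = Gf n W p q + wnat n W (p+1) q := by
      unfold Gf; rw [if_neg (by omega), if_neg (by omega),
        Finset.sum_Icc_succ_top (by omega : q ≤ p + 1)]
    have e2' : Gf n W p (q+1) = ∑ t ∈ Finset.Icc (q+1) p, wnat n W t (q+1) := by
      unfold Gf
      by_cases hpq : p ≤ q + 1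
      · have hpq' : p = q + 1 := by omega
        subst hpq'; simp
      · rw [if_neg hpq]
    have e2 : Gf n W (p+1) (q+1) = Gf n W p (q+1) + wnat n W (p+1) (q+1) := by
      rw [e2']
      unfold Gf
      rw [if_neg (by omega), Finset.sum_Icc_succ_top (by omega : q + 1 ≤ p + 1)]
    have hpara := (para_nat hP (p+1) q (by omega) hp).1
    linarith

/-- general strict supermodularity of `Gf` -/
lemma super (hT : StrictTrapeze n W) (hP : StrictPara n W) :
    ∀ x y u v : ℕ, x < y → u < v → y < n → v < n →
    Gf n W x v + Gf n W y u < Gf n W x u + Gf n W y v := by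
  have rowcase : ∀ x, x + 1 < n → ∀ u v, u < v → v < n →
      Gf n W x v + Gf n W (x+1) u < Gf n W x u + Gf n W (x+1) v := by
    intro x hx u v huv hv
    induction v, huv using Nat.le_induction with
    | base => exact adj hT hP x u hx (by omega)
    | succ v hv' ih =>
      have h1 := ih (by omega)
      have h2 := adj hT hP x v hx (by omega)
      linarith
  intro x y u v hxy huv hy hv
  induction y, hxy using Nat.le_induction with
  | base => exact rowcase x hy u v huv hv
  | succ y hy' ih =>
    have h1 := ih (by omega)
    have h2 := rowcase y (by omega) u v huv hv
    linarith

/-! ### permutation part -/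

lemma swap_lt {k : ℕ} (M : Fin k → Fin k → ℝ)
    (hM : ∀ i j u v : Fin k, i < j → u < v → M i v + M j u < M i u + M j v)
    (σ : Equiv.Perm (Fin k)) (i j : Fin k) (hij : i < j) (hσ : σ j < σ i) :
    ∑ t, M t (σ t) < ∑ t, M t ((σ * Equiv.swap i j) t) := by
  have hne : i ≠ j := ne_of_lt hij
  have hsplit : ∀ f : Fin k → ℝ,
      ∑ t, f t = f i + f j + ∑ t ∈ (Finset.univ.erase i).erase j, f t := by
    intro f
    rw [← Finset.add_sum_erase _ f (Finset.mem_univ i),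
      ← Finset.add_sum_erase _ f (by simp [hne.symm] : j ∈ Finset.univ.erase i)]
    ring
  rw [hsplit (fun t => M t (σ t)), hsplit (fun t => M t ((σ * Equiv.swap i j) t))]
  have hrest : ∑ t ∈ (Finset.univ.erase i).erase j, M t (σ t)
      = ∑ t ∈ (Finset.univ.erase i).erase j, M t ((σ * Equiv.swap i j) t) := by
    refine Finset.sum_congr rfl fun t ht => ?_
    simp only [Finset.mem_erase] at ht
    rw [Equiv.Perm.mul_apply, Equiv.swap_apply_of_ne_of_ne ht.2.1 ht.1]
  rw [hrest]
  have h1 : (σ * Equiv.swap i j) i = σ j := by simp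
  have h2 : (σ * Equiv.swap i j) j = σ i := by simp
  rw [h1, h2]
  have := hM i j (σ j) (σ i) hij hσ
  linarith

lemma perm_lt {k : ℕ} (M : Fin k → Fin k → ℝ)
    (hM : ∀ i j u v : Fin k, i < j → u < v → M i v + M j u < M i u + M j v)
    (σ : Equiv.Perm (Fin k)) (hσ : σ ≠ 1) :
    ∑ t, M t (σ t) < ∑ t, M t t := by
  have inv_of_ne : ∀ τ : Equiv.Perm (Fin k), τ ≠ 1 → ∃ i j, i < j ∧ τ j < τ i := by
    intro τ hτ
    by_contra hcon
    push_neg at hcon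
    have hmono : StrictMono τ := by
      intro a b hab
      rcases lt_or_eq_of_le (hcon a b hab) with h | h
      · exact h
      · exact absurd (τ.injective h) (ne_of_lt hab)
    refine hτ (Equiv.ext fun x => ?_)
    have e : (StrictMono.orderIsoOfSurjective τ hmono τ.surjective) = OrderIso.refl (Fin k) :=
      Subsingleton.elim _ _
    simpa using congrArg (fun g : Fin k ≃o Fin k => g x) e
  obtain ⟨σ₀, -, hmax⟩ := Finset.exists_max_image Finset.univ
    (fun τ : Equiv.Perm (Fin k) => ∑ t, M t (τ t)) ⟨1, Finset.mem_univ 1⟩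
  have hσ₀ : σ₀ = 1 := by
    by_contra h
    obtain ⟨i, j, hij, hji⟩ := inv_of_ne σ₀ h
    exact absurd (hmax _ (Finset.mem_univ (σ₀ * Equiv.swap i j)))
      (not_le.2 (swap_lt M hM σ₀ i j hij hji))
  obtain ⟨i, j, hij, hji⟩ := inv_of_ne σ hσ
  calc ∑ t, M t (σ t) < ∑ t, M t ((σ * Equiv.swap i j) t) := swap_lt M hM σ i j hij hji
    _ ≤ ∑ t, M t (σ₀ t) := hmax _ (Finset.mem_univ _)
    _ = ∑ t, M t t := by rw [hσ₀]; simp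

/-! ### tropical elementary products -/

lemma tropMul_xLow (P : Matrix (Fin n) (Fin n) (WithBot ℝ)) (a : ℕ) (s : ℝ)
    (ha : a + 1 < n) :
    tropMul P (xLow n a s) =
      fun i j => if j.val = a then P i j ⊔ (P i ⟨a+1, ha⟩ + ↑s) else P i j := by
  funext i j
  unfold tropMul xLow
  by_cases hj : j.val = a
  · rw [if_pos hj]
    apply le_antisymm
    · refine Finset.sup_le fun k _ => ?_
      by_cases hk : k = j
      · subst hk; rw [if_pos rfl, add_zero]; exact le_sup_left
      · rw [if_neg hk]
        by_cases hk2 : k.val = a + 1 ∧ j.val = a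
        · have : k = (⟨a+1, ha⟩ : Fin n) := Fin.ext hk2.1
          subst this
          rw [if_pos hk2]; exact le_sup_right
        · rw [if_neg hk2, WithBot.add_bot]; exact bot_le
    · apply sup_le
      · have := Finset.le_sup (f := fun k => P i k + (if k = j then 0 else
          if k.val = a + 1 ∧ j.val = a then (s : WithBot ℝ) else ⊥)) (Finset.mem_univ j)
        simpa using this
      · have hne : (⟨a+1, ha⟩ : Fin n) ≠ j := by
          intro h; have := congrArg Fin.val h; simp [hj] at this
        have := Finset.le_sup (f := fun k => P i k + (if k = j then 0 else
          if k.val = a + 1 ∧ j.val = a then (s : WithBot ℝ) else ⊥)) (Finset.mem_univ (⟨a+1, ha⟩ : Fin n))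
        simpa [hne, hj] using this
  · rw [if_neg hj]
    apply le_antisymm
    · refine Finset.sup_le fun k _ => ?_
      by_cases hk : k = j
      · subst hk; rw [if_pos rfl, add_zero]
      · rw [if_neg hk, if_neg (fun h => hj h.2), WithBot.add_bot]; exact bot_le
    · have := Finset.le_sup (f := fun k => P i k + (if k = j then 0 else
        if k.val = a + 1 ∧ j.val = a then (s : WithBot ℝ) else ⊥)) (Finset.mem_univ j)
      simpa using this

lemma tropMul_xDiag (P : Matrix (Fin n) (Fin n) (WithBot ℝ)) (d : ℕ) (s : ℝ) :
    tropMul P (xDiag n d s) =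
      fun i j => P i j + (if j.val = d then (s : WithBot ℝ) else 0) := by
  funext i j
  unfold tropMul xDiag
  apply le_antisymm
  · refine Finset.sup_le fun k _ => ?_
    by_cases hk : k = j
    · subst hk; rw [if_pos rfl]
    · rw [if_neg hk, WithBot.add_bot]; exact bot_le
  · have := Finset.le_sup (f := fun k => P i k +
      (if k = j then (if k.val = d then (s : WithBot ℝ) else 0) else ⊥)) (Finset.mem_univ j)
    simpa using this

lemma tropMul_diag (P : Matrix (Fin n) (Fin n) (WithBot ℝ)) (f : Fin n → WithBot ℝ)
    (D : Matrix (Fin n) (Fin n) (WithBot ℝ)) (hD : D = fun i j => if i = j then f j else ⊥) :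
    tropMul P D = fun i j => P i j + f j := by
  subst hD
  funext i j
  unfold tropMul
  apply le_antisymm
  · refine Finset.sup_le fun k _ => ?_
    by_cases hk : k = j
    · subst hk; simp
    · simp only [if_neg hk, WithBot.add_bot]; exact bot_le
  · have := Finset.le_sup (f := fun k => P i k +
      (if k = j then f j else ⊥)) (Finset.mem_univ j)
    simpa using this

/-! ### the invariant for the `Lmat` fold -/

/-- Partial-product state for the fold computing `Lmat`. -/
def StL (n : ℕ) (W : Matrix (Fin n) (Fin n) ℝ) (c m : ℕ) :
    Matrix (Fin n) (Fin n) (WithBot ℝ) :=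
  fun i j =>
    if i = j then 0
    else if j < i ∧ c ≤ j.val + 1 ∧ (c ≤ j.val ∨ 0 < m) then
      ((∑ r ∈ Finset.Icc (j.val+1) i.val,
        wnat n W r (if j.val + 1 < c + m then j.val + 1 - c else j.val - c) : ℝ) : WithBot ℝ)
    else ⊥

lemma StL_diag (c m : ℕ) (i : Fin n) : StL n W c m i i = 0 := by simp [StL]

lemma StL_bot_of_le (c m : ℕ) (i j : Fin n) (h : i < j) : StL n W c m i j = ⊥ := by
  have h1 : i ≠ j := ne_of_lt h
  have h2 : ¬ j < i := by omega
  simp only [StL, if_neg h1,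
    if_neg (show ¬(j < i ∧ c ≤ j.val + 1 ∧ (c ≤ j.val ∨ 0 < m)) from fun hh => h2 hh.1)]

lemma StL_bot_low (c m : ℕ) (i j : Fin n) (hji : j < i)
    (h : ¬ (c ≤ j.val ∨ 0 < m)) : StL n W c m i j = ⊥ := by
  have h1 : i ≠ j := (ne_of_lt hji).symm
  simp only [StL, if_neg h1,
    if_neg (show ¬(j < i ∧ c ≤ j.val + 1 ∧ (c ≤ j.val ∨ 0 < m)) from fun hh => h hh.2.2)]

lemma StL_val (c m : ℕ) (i j : Fin n) (hji : j < i) (h2 : c ≤ j.val ∨ 0 < m) :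
    (hc1 : c ≤ j.val + 1) →
    StL n W c m i j = ((∑ r ∈ Finset.Icc (j.val+1) i.val,
      wnat n W r (if j.val + 1 < c + m then j.val + 1 - c else j.val - c) : ℝ) : WithBot ℝ) := by
  intro hc1
  have h1 : i ≠ j := (ne_of_lt hji).symm
  simp only [StL, if_neg h1]
  rw [if_pos (show j < i ∧ c ≤ j.val + 1 ∧ (c ≤ j.val ∨ 0 < m) from ⟨hji, hc1, h2⟩)]

lemma StL00_val (i j : Fin n) (hji : j < i) :
    StL n W 0 0 i j = ((∑ r ∈ Finset.Icc (j.val+1) i.val, wnat n W r j.val : ℝ) : WithBot ℝ) := by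
  rw [StL_val 0 0 i j hji (Or.inl (by omega)) (by omega)]
  norm_num

/-- The key single-factor step. -/
lemma StL_step (hP : StrictPara n W) (c m : ℕ) (hc : 1 ≤ c) (hcm : c + m + 1 ≤ n) :
    tropMul (StL n W c m) (xLow n (c - 1 + m) (wnat n W (c + m) m)) = StL n W c (m+1) := by
  have han : c - 1 + m + 1 < n := by omega
  rw [tropMul_xLow (StL n W c m) (c-1+m) (wnat n W (c+m) m) han]
  funext i j
  set e : Fin n := ⟨c-1+m+1, han⟩ with he
  show (if j.val = c - 1 + m then
      StL n W c m i j ⊔ (StL n W c m i e + ↑(wnat n W (c+m) m))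
    else StL n W c m i j) = StL n W c (m+1) i j
  have hev : e.val = c + m := by simp [he]; omega
  by_cases hj : j.val = c - 1 + m
  · rw [if_pos hj]
    by_cases hij : i = j
    · subst hij
      rw [StL_diag, StL_diag, StL_bot_of_le _ _ _ _ (by
        change i.val < e.val; omega), WithBot.bot_add]
      simp
    · by_cases hji : j < i
      · have hiv : c + m ≤ i.val := by change j.val < i.val at hji; omega
        have hrhs : StL n W c (m+1) i j =
            ((∑ r ∈ Finset.Icc (c+m) i.val, wnat n W r m : ℝ) : WithBot ℝ) := by
          rw [StL_val c (m+1) i j hji (Or.inr (by omega)) (by omega)]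
          have h1 : j.val + 1 = c + m := by omega
          rw [h1, if_pos (by omega)]
          congr 1
          exact Finset.sum_congr rfl fun r _ => by congr 1; omega
        have hY : StL n W c m i e + ↑(wnat n W (c+m) m) =
            ((∑ r ∈ Finset.Icc (c+m) i.val, wnat n W r m : ℝ) : WithBot ℝ) := by
          by_cases hie : i = e
          · rw [hie, StL_diag, zero_add, hev, Finset.Icc_self, Finset.sum_singleton]
          · have hlt : e < i := by
              change e.val < i.val
              rcases lt_or_eq_of_le hiv with h | h
              · omega
              · exact absurd (Fin.ext (by omega) : i = e) hie
            rw [StL_val c m i e hlt (Or.inl (by omega)) (by omega)]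
            rw [← WithBot.coe_add]
            congr 1
            have hoff : (if e.val + 1 < c + m then e.val + 1 - c else e.val - c) = m := by
              rw [hev]; rw [if_neg (by omega)]; omega
            rw [hoff, hev]
            rw [sum_Icc_bot _ (c+m) i.val hiv]
            ring
        rw [hrhs, hY]
        rw [sup_eq_right]
        by_cases hm : m = 0
        · rw [StL_bot_low c m i j hji (by omega)]; exact bot_le
        · rw [StL_val c m i j hji (Or.inl (by omega)) (by omega)]
          have h1 : j.val + 1 = c + m := by omega
          rw [h1, if_neg (by omega)]
          apply WithBot.coe_le_coe.2
          apply Finset.sum_le_sum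
          intro r hr
          simp only [Finset.mem_Icc] at hr
          have := (para_nat hP r (m-1) (by omega) (by omega)).1
          have hm1 : m - 1 + 1 = m := by omega
          rw [hm1] at this
          have hjc : j.val - c = m - 1 := by omega
          rw [hjc]
          exact this.le
      · have hij2 : i < j := by
          rcases lt_trichotomy i j with h | h | h
          · exact h
          · exact absurd h hij
          · exact absurd h hji
        rw [StL_bot_of_le _ _ _ _ hij2, StL_bot_of_le _ _ _ _ (by
          change i.val < e.val; change i.val < j.val at hij2; omega),
          StL_bot_of_le _ _ _ _ hij2, WithBot.bot_add]
        simp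
  · rw [if_neg hj]
    by_cases hij : i = j
    · subst hij; rw [StL_diag, StL_diag]
    · have hoff : (if j.val + 1 < c + m then j.val + 1 - c else j.val - c)
          = (if j.val + 1 < c + (m+1) then j.val + 1 - c else j.val - c) := by
        split_ifs with h1 h2 h2
        · rfl
        · omega
        · exfalso; omega
        · rfl
      have hiff : (j < i ∧ c ≤ j.val + 1 ∧ (c ≤ j.val ∨ 0 < m)) ↔
          (j < i ∧ c ≤ j.val + 1 ∧ (c ≤ j.val ∨ 0 < m+1)) := by
        constructor
        · rintro ⟨a1, a2, a3⟩; exact ⟨a1, a2, by omega⟩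
        · rintro ⟨a1, a2, a3⟩; exact ⟨a1, a2, by omega⟩
      simp only [StL, if_neg hij]
      rw [hoff, if_congr hiff rfl rfl]

/-! ### the folds -/

lemma StL_init : tropId n = StL n W (n-1) 0 := by
  funext i j
  unfold tropId StL
  by_cases hij : i = j
  · rw [if_pos hij, if_pos hij]
  · rw [if_neg hij, if_neg hij, if_neg]
    rintro ⟨hh1, hh2, hh3 | hh3⟩
    · have hi := i.isLt
      change j.val < i.val at hh1
      omega
    · exact absurd hh3 (lt_irrefl 0)

lemma StL_block_end (c : ℕ) (hc : 1 ≤ c) (hcn : c + 1 ≤ n) :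
    StL n W c (n - c) = StL n W (c-1) 0 := by
  funext i j
  unfold StL
  by_cases hij : i = j
  · rw [if_pos hij, if_pos hij]
  · rw [if_neg hij, if_neg hij]
    by_cases hji : j < i
    · have hjv : j.val < i.val := hji
      have hin : i.val < n := i.isLt
      by_cases hcj : c - 1 ≤ j.val
      · have hoff : (if j.val + 1 < c + (n - c) then j.val + 1 - c else j.val - c)
            = (if j.val + 1 < (c-1) + 0 then j.val + 1 - (c-1) else j.val - (c-1)) := by
          rw [if_pos (by omega), if_neg (by omega)]
          omega
        rw [hoff]
        refine if_congr ?_ rfl rfl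
        constructor
        · rintro ⟨a1, a2, a3⟩; exact ⟨a1, by omega, Or.inl (by omega)⟩
        · rintro ⟨a1, a2, a3 | a3⟩
          · exact ⟨a1, by omega, Or.inr (by omega)⟩
          · exact absurd a3 (lt_irrefl 0)
      · have hn1 : ¬(j < i ∧ c ≤ j.val + 1 ∧ (c ≤ j.val ∨ 0 < n - c)) := by
          rintro ⟨a1, a2, a3⟩
          exact hcj (by omega)
        have hn2 : ¬(j < i ∧ c - 1 ≤ j.val + 1 ∧ (c - 1 ≤ j.val ∨ 0 < 0)) := by
          rintro ⟨a1, a2, a3 | a3⟩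
          · exact hcj a3
          · exact absurd a3 (lt_irrefl 0)
        rw [if_neg hn1, if_neg hn2]
    · have hn1 : ¬(j < i ∧ c ≤ j.val + 1 ∧ (c ≤ j.val ∨ 0 < n - c)) := fun hh => hji hh.1
      have hn2 : ¬(j < i ∧ c - 1 ≤ j.val + 1 ∧ (c - 1 ≤ j.val ∨ 0 < 0)) := fun hh => hji hh.1
      rw [if_neg hn1, if_neg hn2]

lemma inner_fold (hP : StrictPara n W) (K : ℕ) (hK : K + 2 ≤ n) :
    ∀ m, m ≤ K + 1 →
    List.foldl tropMul (StL n W (n-1-K) 0)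
      ((List.range m).map fun t => xLow n (n - K + t - 2) (wnat n W (n - K + t - 1) t))
      = StL n W (n-1-K) m := by
  intro m
  induction m with
  | zero => intro _; simp
  | succ m ih =>
    intro hm
    rw [List.range_succ, List.map_append, List.foldl_append, ih (by omega)]
    simp only [List.map_cons, List.map_nil, List.foldl_cons, List.foldl_nil]
    have e1 : n - K + m - 2 = (n-1-K) - 1 + m := by omega
    have e2 : n - K + m - 1 = (n-1-K) + m := by omega
    rw [e1, e2]
    exact StL_step hP (n-1-K) m (by omega) (by omega)

lemma outer_fold (hP : StrictPara n W) :
    ∀ K, K ≤ n - 1 →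
    List.foldl tropMul (tropId n)
      ((List.range K).flatMap fun k => (List.range (k+1)).map fun t =>
        xLow n (n - k + t - 2) (wnat n W (n - k + t - 1) t))
      = StL n W (n-1-K) 0 := by
  intro K
  induction K with
  | zero =>
    intro _
    simpa using (StL_init (n := n) (W := W))
  | succ K ih =>
    intro hK
    have hn : K + 2 ≤ n := by omega
    rw [List.range_succ, List.flatMap_append, List.foldl_append, ih (by omega)]
    simp only [List.flatMap_cons, List.flatMap_nil, List.append_nil]
    rw [inner_fold hP K hn (K+1) le_rfl]
    have hbe := StL_block_end (n := n) (W := W) (n-1-K) (by omega) (by omega)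
    rw [show n - (n-1-K) = K + 1 from by omega] at hbe
    rw [hbe, show n - 1 - K - 1 = n - 1 - (K+1) from by omega]

lemma Lmat_eq (hP : StrictPara n W) : Lmat n W = StL n W 0 0 := by
  unfold Lmat
  have h := outer_fold hP (n-1) le_rfl
  rwa [Nat.sub_self] at h

/-! ### the diagonal fold -/

def StD (n : ℕ) (W : Matrix (Fin n) (Fin n) ℝ) (m : ℕ) :
    Matrix (Fin n) (Fin n) (WithBot ℝ) :=
  fun i j => if i = j then
    (if i.val < m then ((wnat n W i.val i.val : ℝ) : WithBot ℝ) else 0) else ⊥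

lemma D_fold : ∀ m, m ≤ n →
    List.foldl tropMul (tropId n)
      ((List.range m).map fun i => xDiag n i (wnat n W i i)) = StD n W m := by
  intro m
  induction m with
  | zero =>
    intro _
    funext i j
    simp [tropId, StD]
  | succ m ih =>
    intro hm
    rw [List.range_succ, List.map_append, List.foldl_append, ih (by omega)]
    simp only [List.map_cons, List.map_nil, List.foldl_cons, List.foldl_nil]
    rw [tropMul_xDiag]
    funext i j
    show StD n W m i j + (if j.val = m then ((wnat n W m m : ℝ) : WithBot ℝ) else 0)
      = StD n W (m+1) i j
    by_cases hij : i = j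
    · subst hij
      unfold StD
      rw [if_pos rfl, if_pos rfl]
      by_cases him : i.val = m
      · rw [if_pos him, if_neg (by omega), if_pos (by omega), zero_add, him]
      · rw [if_neg him]
        by_cases h2 : i.val < m
        · rw [if_pos h2, if_pos (by omega), add_zero]
        · rw [if_neg h2, if_neg (by omega), add_zero]
    · unfold StD
      rw [if_neg hij, if_neg hij]
      by_cases hjm : j.val = m
      · rw [if_pos hjm, WithBot.bot_add]
      · rw [if_neg hjm, add_zero]

lemma Dmat_eq : Dmat n W =
    fun i j => if i = j then ((wnat n W j.val j.val : ℝ) : WithBot ℝ) else ⊥ := by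
  unfold Dmat
  rw [D_fold n le_rfl]
  funext i j
  unfold StD
  by_cases hij : i = j
  · subst hij
    rw [if_pos rfl, if_pos rfl, if_pos i.isLt]
  · rw [if_neg hij, if_neg hij]

/-! ### the transfer matrix -/

lemma LD_eq (hP : StrictPara n W) : tropMul (Lmat n W) (Dmat n W) =
    fun i j => if j ≤ i then
      ((∑ r ∈ Finset.Icc j.val i.val, wnat n W r j.val : ℝ) : WithBot ℝ) else ⊥ := by
  rw [Lmat_eq hP,
    tropMul_diag _ (fun j : Fin n => ((wnat n W j.val j.val : ℝ) : WithBot ℝ)) (Dmat n W) Dmat_eq]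
  funext i j
  show StL n W 0 0 i j + _ = _
  by_cases hij : i = j
  · subst hij
    rw [StL_diag, zero_add, if_pos le_rfl, Finset.Icc_self, Finset.sum_singleton]
  · by_cases hji : j < i
    · rw [StL00_val i j hji, if_pos (le_of_lt hji), ← WithBot.coe_add,
        sum_Icc_bot _ j.val i.val (by change j.val < i.val at hji; omega)]
      congr 1
      ring
    · have hij2 : i < j := by
        rcases lt_trichotomy i j with h | h | h
        · exact h
        · exact absurd h hij
        · exact absurd h hji
      rw [StL_bot_of_le _ _ _ _ hij2, WithBot.bot_add, if_neg (by
        change ¬ j.val ≤ i.val; change i.val < j.val at hij2; omega)]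

lemma para_transpose (hP : StrictPara n W) : StrictPara n W.transpose := by
  intro i j h
  have := hP i j h
  exact ⟨this.2, this.1⟩

lemma wnat_transpose (a b : ℕ) : wnat n W.transpose a b = wnat n W b a := by
  unfold wnat
  by_cases h : a < n ∧ b < n
  · rw [dif_pos h, dif_pos ⟨h.2, h.1⟩]
    rfl
  · rw [dif_neg h, dif_neg (fun hh => h ⟨hh.2, hh.1⟩)]

lemma R_eq (hP : StrictPara n W) : (Lmat n W.transpose).transpose =
    fun (m j : Fin n) => if m ≤ j then
      ((∑ s ∈ Finset.Icc (m.val+1) j.val, wnat n W m.val s : ℝ) : WithBot ℝ) else ⊥ := by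
  have hP' := para_transpose hP
  funext m j
  rw [Matrix.transpose_apply, Lmat_eq hP']
  by_cases h : m = j
  · subst h
    rw [StL_diag, if_pos le_rfl, Finset.Icc_eq_empty (by omega), Finset.sum_empty,
      WithBot.coe_zero]
  · by_cases hmj : m < j
    · rw [StL00_val j m hmj, if_pos (le_of_lt hmj)]
      congr 1
      refine Finset.sum_congr rfl fun s _ => ?_
      rw [wnat_transpose]
    · have hjm : j < m := by
        rcases lt_trichotomy m j with hh | hh | hh
        · exact absurd hh hmj
        · exact absurd hh h
        · exact hh
      rw [StL_bot_of_le _ _ _ _ hjm, if_neg (by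
        change ¬ m.val ≤ j.val; change j.val < m.val at hjm; omega)]

/-! ### the entrywise value of `Tmat` -/

def Ff (n : ℕ) (W : Matrix (Fin n) (Fin n) ℝ) (iv jv m : ℕ) : ℝ :=
  (∑ r ∈ Finset.Icc m iv, wnat n W r m) + ∑ s ∈ Finset.Icc (m+1) jv, wnat n W m s

lemma Ff_mono (hT : StrictTrapeze n W) (hP : StrictPara n W) (iv jv m : ℕ)
    (hiv : iv < n) (hjv : jv < n) (hmi : m + 1 ≤ iv) (hmj : m + 1 ≤ jv) :
    Ff n W iv jv m ≤ Ff n W iv jv (m+1) := by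
  unfold Ff
  have e1 : ∑ r ∈ Finset.Icc m iv, wnat n W r m
      = wnat n W m m + (wnat n W (m+1) m + ∑ r ∈ Finset.Icc (m+1+1) iv, wnat n W r m) := by
    rw [sum_Icc_bot _ m iv (by omega), sum_Icc_bot _ (m+1) iv (by omega)]
  have e2 : ∑ s ∈ Finset.Icc (m+1) jv, wnat n W m s
      = wnat n W m (m+1) + ∑ s ∈ Finset.Icc (m+1+1) jv, wnat n W m s :=
    sum_Icc_bot _ (m+1) jv (by omega)
  have e3 : ∑ r ∈ Finset.Icc (m+1) iv, wnat n W r (m+1)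
      = wnat n W (m+1) (m+1) + ∑ r ∈ Finset.Icc (m+1+1) iv, wnat n W r (m+1) :=
    sum_Icc_bot _ (m+1) iv (by omega)
  rw [e1, e2, e3]
  have ht := trap_nat hT m (by omega)
  have s1 : ∑ r ∈ Finset.Icc (m+1+1) iv, wnat n W r m
      ≤ ∑ r ∈ Finset.Icc (m+1+1) iv, wnat n W r (m+1) := by
    refine Finset.sum_le_sum fun r hr => ?_
    simp only [Finset.mem_Icc] at hr
    exact (para_nat hP r m (by omega) (by omega)).1.le
  have s2 : ∑ s ∈ Finset.Icc (m+1+1) jv, wnat n W m s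
      ≤ ∑ s ∈ Finset.Icc (m+1+1) jv, wnat n W (m+1) s := by
    refine Finset.sum_le_sum fun s hs => ?_
    simp only [Finset.mem_Icc] at hs
    exact (para_nat hP s m (by omega) (by omega)).2.le
  linarith

lemma Ff_mono_le (hT : StrictTrapeze n W) (hP : StrictPara n W) (iv jv : ℕ)
    (hiv : iv < n) (hjv : jv < n) :
    ∀ m M, m ≤ M → M ≤ iv → M ≤ jv → Ff n W iv jv m ≤ Ff n W iv jv M := by
  intro m M hm
  induction M, hm using Nat.le_induction with
  | base => intro _ _; exact le_rfl
  | succ M hM ih =>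
    intro h1 h2
    exact le_trans (ih (by omega) (by omega))
      (Ff_mono hT hP iv jv M hiv hjv (by omega) (by omega))

lemma Ff_min_eq (iv jv : ℕ) :
    Ff n W iv jv (min iv jv) = Gf n W iv jv := by
  unfold Ff Gf
  by_cases h : iv ≤ jv
  · rw [min_eq_left h, if_pos h, Finset.Icc_self, Finset.sum_singleton,
      sum_Icc_bot _ iv jv h]
  · have h' : jv ≤ iv := le_of_not_ge h
    rw [min_eq_right h', if_neg h,
      Finset.Icc_eq_empty (show ¬ jv + 1 ≤ jv by omega), Finset.sum_empty, add_zero]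

lemma tropMul_apply {l m p : ℕ} (A : Matrix (Fin l) (Fin m) (WithBot ℝ))
    (B : Matrix (Fin m) (Fin p) (WithBot ℝ)) (i : Fin l) (j : Fin p) :
    tropMul A B i j = Finset.univ.sup fun k => A i k + B k j := rfl

lemma Tmat_eq (hT : StrictTrapeze n W) (hP : StrictPara n W) :
    Tmat n W = (psi n W).map ((↑) : ℝ → WithBot ℝ) := by
  funext i j
  show tropMul (tropMul (Lmat n W) (Dmat n W)) ((Lmat n W.transpose).transpose) i j = _
  rw [Matrix.map_apply, psi_eq_Gf, tropMul_apply]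
  set M := min i.val j.val with hM
  have hMn : M < n := lt_of_le_of_lt (min_le_left _ _) i.isLt
  have key : ∀ k : Fin n,
      tropMul (Lmat n W) (Dmat n W) i k + (Lmat n W.transpose).transpose k j
      = if k.val ≤ M then ((Ff n W i.val j.val k.val : ℝ) : WithBot ℝ) else ⊥ := by
    intro k
    rw [LD_eq hP, R_eq hP]
    beta_reduce
    by_cases h1 : k ≤ i
    · by_cases h2 : k ≤ j
      · rw [if_pos h1, if_pos h2, if_pos (by
          change k.val ≤ i.val at h1; change k.val ≤ j.val at h2; omega),
          ← WithBot.coe_add]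
        rfl
      · rw [if_pos h1, if_neg h2, WithBot.add_bot, if_neg (by
          change ¬ k.val ≤ j.val at h2; omega)]
    · rw [if_neg h1, WithBot.bot_add, if_neg (by
        change ¬ k.val ≤ i.val at h1; omega)]
  rw [Finset.sup_congr rfl (fun k _ => key k)]
  have hFG : Ff n W i.val j.val M = Gf n W i.val j.val := by
    rw [hM]; exact Ff_min_eq i.val j.val
  apply le_antisymm
  · refine Finset.sup_le fun k _ => ?_
    by_cases hk : k.val ≤ M
    · rw [if_pos hk, ← hFG]
      exact WithBot.coe_le_coe.2
        (Ff_mono_le hT hP i.val j.val i.isLt j.isLt k.val M hk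
          (by rw [hM]; exact min_le_left _ _) (by rw [hM]; exact min_le_right _ _))
    · rw [if_neg hk]; exact bot_le
  · have hle := Finset.le_sup (f := fun k : Fin n =>
      if k.val ≤ M then ((Ff n W i.val j.val k.val : ℝ) : WithBot ℝ) else ⊥)
      (Finset.mem_univ (⟨M, hMn⟩ : Fin n))
    refine le_trans (le_of_eq ?_) hle
    show ((Gf n W i.val j.val : ℝ) : WithBot ℝ)
      = if ((⟨M, hMn⟩ : Fin n)).val ≤ M then
          ((Ff n W i.val j.val ((⟨M, hMn⟩ : Fin n)).val : ℝ) : WithBot ℝ) else ⊥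
    rw [if_pos (show ((⟨M, hMn⟩ : Fin n)).val ≤ M from le_rfl)]
    show ((Gf n W i.val j.val : ℝ) : WithBot ℝ) = ((Ff n W i.val j.val M : ℝ) : WithBot ℝ)
    rw [hFG]

end TropAux

/-- if `W` satisfies the strict trapeze and parallelogram
inequalities, then `T(W)` has real entries and is tropical totally positive. -/
theorem transfer_of_strict_ineqs_TP (n : ℕ) (W : Matrix (Fin n) (Fin n) ℝ)
    (h1 : StrictTrapeze n W) (h2 : StrictPara n W) :
    ∃ A : Matrix (Fin n) (Fin n) ℝ,
      Tmat n W = A.map ((↑) : ℝ → WithBot ℝ) ∧ IsTropTP n A := by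
  refine ⟨psi n W, TropAux.Tmat_eq h1 h2, ?_⟩
  intro k hk r c hr hc
  set M : Fin k → Fin k → ℝ := fun p q => TropAux.Gf n W (r p).val (c q).val with hMdef
  have hsub : ∀ p q : Fin k,
      ((psi n W).map ((↑) : ℝ → WithBot ℝ)).submatrix r c p q = ((M p q : ℝ) : WithBot ℝ) := by
    intro p q
    rw [Matrix.submatrix_apply, Matrix.map_apply, TropAux.psi_eq_Gf]
  have hM : ∀ p q u v : Fin k, p < q → u < v → M p v + M q u < M p u + M q v := by
    intro p q u v hpq huv
    exact TropAux.super h1 h2 (r p).val (r q).val (c u).val (c v).val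
      (hr hpq) (hc huv) (r q).isLt (c v).isLt
  have hcoe : ∀ σ : Equiv.Perm (Fin k),
      (∑ p, ((psi n W).map ((↑) : ℝ → WithBot ℝ)).submatrix r c p (σ p))
        = ((∑ p, M p (σ p) : ℝ) : WithBot ℝ) := by
    intro σ
    rw [Finset.sum_congr rfl fun p _ => hsub p (σ p)]
    push_cast
    rfl
  have hub : tropPermSup k (-1) (((psi n W).map ((↑) : ℝ → WithBot ℝ)).submatrix r c)
      < ((∑ p, M p p : ℝ) : WithBot ℝ) := by
    unfold tropPermSup
    rw [Finset.sup_lt_iff (WithBot.bot_lt_coe _)]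
    intro σ hσ
    simp only [Finset.mem_filter] at hσ
    have hσ1 : σ ≠ 1 := by
      intro e
      rw [e] at hσ
      simp at hσ
    rw [hcoe σ]
    exact WithBot.coe_lt_coe.2 (TropAux.perm_lt M hM σ hσ1)
  have hlb : ((∑ p, M p p : ℝ) : WithBot ℝ)
      ≤ tropPermSup k 1 (((psi n W).map ((↑) : ℝ → WithBot ℝ)).submatrix r c) := by
    unfold tropPermSup
    have hmem : (1 : Equiv.Perm (Fin k)) ∈ Finset.univ.filter
        (fun σ : Equiv.Perm (Fin k) => Equiv.Perm.sign σ = 1) := by simp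
    have hle := Finset.le_sup (f := fun σ : Equiv.Perm (Fin k) =>
      ∑ p, ((psi n W).map ((↑) : ℝ → WithBot ℝ)).submatrix r c p (σ p)) hmem
    exact le_trans (le_of_eq (hcoe 1).symm) hle
  exact lt_of_lt_of_le hub hlb
end

section
/- If W ∈ Matrix (Fin n) (Fin n) ℝ satisfies the strict trapeze inequalities and the strict parallelogram inequalities, then for all 2 ≤ i, j ≤ n one has ψ(W)_{i,j} + ψ(W)_{i−1,j−1} > ψ(W)_{i−1,j} + ψ(W)_{i,j−1}. -/
open Finset

/-- strict trapeze and parallelogram inequalities imply strict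
tropical positivity of the consecutive 2×2 minors of `ψ(W)`. -/
theorem psi_consecutive_minors (n : ℕ) (W : Matrix (Fin n) (Fin n) ℝ)
    (h1 : StrictTrapeze n W) (h2 : StrictPara n W) :
    ∀ i j : Fin n, 0 < i.val → 0 < j.val →
      psi n W (fpred i) j + psi n W i (fpred j) <
        psi n W i j + psi n W (fpred i) (fpred j) := by
  intro i j hi hj
  have key : ∀ a b : Fin n, a ≤ fpred b → 0 < b.val →
      Finset.Icc a b = insert b (Finset.Icc a (fpred b)) := by
    intro a b hab hb
    ext t
    simp only [Finset.mem_Icc, Finset.mem_insert, Fin.le_def, Fin.ext_iff, fpred] at *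
    omega
  have notmem : ∀ a b : Fin n, 0 < b.val → b ∉ Finset.Icc a (fpred b) := by
    intro a b hb hmem
    simp only [Finset.mem_Icc, Fin.le_def, fpred] at hmem
    omega
  have rowval : ∀ a b : Fin n, a ≤ b → psi n W a b = ∑ t ∈ Finset.Icc a b, W a t := by
    intro a b hab
    simp [psi, hab]
  have colval : ∀ a b : Fin n, b ≤ a → psi n W a b = ∑ t ∈ Finset.Icc b a, W t b := by
    intro a b hba
    rcases eq_or_lt_of_le hba with h | h
    · subst h; simp [psi]
    · simp [psi, not_le.mpr h]
  rcases lt_trichotomy i j with hlt | heq | hgt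
  · -- i < j : all entries are row sums
    have hij' : i ≤ fpred j := by
      simp only [Fin.le_def, fpred]; exact Nat.le_sub_one_of_lt hlt
    have hi'j' : fpred i ≤ fpred j := by
      simp only [Fin.le_def, fpred]; omega
    have hi'j : fpred i ≤ j := le_trans hi'j' (by simp only [Fin.le_def, fpred]; omega)
    have e1 : psi n W i j = W i j + ∑ t ∈ Finset.Icc i (fpred j), W i t := by
      rw [rowval i j (le_of_lt hlt), key i j hij' hj, Finset.sum_insert (notmem i j hj)]
    have e2 : psi n W (fpred i) j
        = W (fpred i) j + ∑ t ∈ Finset.Icc (fpred i) (fpred j), W (fpred i) t := by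
      rw [rowval (fpred i) j hi'j, key (fpred i) j hi'j' hj,
        Finset.sum_insert (notmem (fpred i) j hj)]
    have e3 := rowval i (fpred j) hij'
    have e4 := rowval (fpred i) (fpred j) hi'j'
    have hpar : W (fpred i) j < W i j := by
      have h := (h2 j (fpred i) (by simp only [fpred]; omega)).2
      have : (⟨(fpred i).val + 1, by have := j.isLt; simp only [fpred]; omega⟩ : Fin n) = i := by
        simp only [fpred, Fin.ext_iff]; omega
      rwa [this] at h
    rw [e1, e2, e3, e4]; linarith
  · -- i = j : trapeze
    subst heq
    have hii' : ¬ i ≤ fpred i := by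
      simp only [Fin.le_def, fpred, not_le]; omega
    have e1 : psi n W i i = W i i := by simp [psi]
    have e2 : psi n W (fpred i) (fpred i) = W (fpred i) (fpred i) := by simp [psi]
    have hle : fpred i ≤ i := by simp only [Fin.le_def, fpred]; omega
    have hIcc : Finset.Icc (fpred i) i = insert i (Finset.Icc (fpred i) (fpred i)) :=
      key (fpred i) i (le_refl _) hi
    have e3 : psi n W (fpred i) i = W (fpred i) i + W (fpred i) (fpred i) := by
      rw [rowval (fpred i) i hle, hIcc, Finset.sum_insert (notmem (fpred i) i hi)]
      simp
    have e4 : psi n W i (fpred i) = W i (fpred i) + W (fpred i) (fpred i) := by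
      rw [colval i (fpred i) hle, hIcc, Finset.sum_insert (notmem (fpred i) i hi)]
      simp
    rw [e1, e2, e3, e4]
    have := h1 i hi
    linarith
  · -- i > j : all entries are column sums
    have hji' : j ≤ fpred i := by
      simp only [Fin.le_def, fpred]; exact Nat.le_sub_one_of_lt hgt
    have hj'i' : fpred j ≤ fpred i := by
      simp only [Fin.le_def, fpred]; omega
    have hj'i : fpred j ≤ i := le_trans hj'i' (by simp only [Fin.le_def, fpred]; omega)
    have e1 : psi n W i j = W i j + ∑ t ∈ Finset.Icc j (fpred i), W t j := by
      rw [colval i j (le_of_lt hgt), key j i hji' hi, Finset.sum_insert (notmem j i hi)]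
    have e2 : psi n W i (fpred j)
        = W i (fpred j) + ∑ t ∈ Finset.Icc (fpred j) (fpred i), W t (fpred j) := by
      rw [colval i (fpred j) hj'i, key (fpred j) i hj'i' hi,
        Finset.sum_insert (notmem (fpred j) i hi)]
    have e3 := colval (fpred i) j hji'
    have e4 := colval (fpred i) (fpred j) hj'i'
    have hpar : W i (fpred j) < W i j := by
      have h := (h2 i (fpred j) (by simp only [fpred]; omega)).1
      have : (⟨(fpred j).val + 1, by have := i.isLt; simp only [fpred]; omega⟩ : Fin n) = j := by
        simp only [fpred, Fin.ext_iff]; omega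
      rwa [this] at h
    rw [e1, e2, e3, e4]; linarith
end

section
/- If W and W′ ∈ Matrix (Fin n) (Fin n) ℝ both satisfy the weak trapeze inequalities and the weak parallelogram inequalities and their tropical transfer matrices agree, T(W) = T(W′), then W = W′. -/
open Finset

open scoped Matrix

/-! Under the parallelogram inequalities on the columns of `W`, the heaviest path in the left
part of `G_n` from source `i` to the diagonal vertex `k ≤ i` runs straight along column `k`,
so `L(W)_{i,k} = ∑_{k<r≤i} W_{r,k}`. The heaviest path from `i` to `j` through `k` then has
weight `∑_{k<r≤i} W_{r,k} + W_{k,k} + ∑_{k<t≤j} W_{k,t}`, which the trapeze and parallelogram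
inequalities make nondecreasing in `k`; hence `T(W)_{i,j}` is the weight `ψ(W)_{i,j}` of the
uppermost path, turning at `min(i, j)`, and `W = φ(ψ(W))` is determined by `T(W)`. -/

section TropicalProduct

variable {l m p : ℕ}

lemma tropMul_apply_eq_of_forall_ne {A : Matrix (Fin l) (Fin m) (WithBot ℝ)}
    {B : Matrix (Fin m) (Fin p) (WithBot ℝ)} {i : Fin l} {j : Fin p} (k₀ : Fin m)
    (h : ∀ k, k ≠ k₀ → A i k + B k j = ⊥) : tropMul A B i j = A i k₀ + B k₀ j := by
  refine le_antisymm (Finset.sup_le fun k _ => ?_) (le_sup (f := fun k => A i k + B k j)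
    (mem_univ k₀))
  by_cases hk : k = k₀
  · rw [hk]
  · rw [h k hk]
    exact bot_le

lemma tropMul_apply_eq_max_of_forall_ne {A : Matrix (Fin l) (Fin m) (WithBot ℝ)}
    {B : Matrix (Fin m) (Fin p) (WithBot ℝ)} {i : Fin l} {j : Fin p} (k₀ k₁ : Fin m)
    (h : ∀ k, k ≠ k₀ → k ≠ k₁ → A i k + B k j = ⊥) :
    tropMul A B i j = max (A i k₀ + B k₀ j) (A i k₁ + B k₁ j) := by
  refine le_antisymm (Finset.sup_le fun k _ => ?_)
    (max_le (le_sup (f := fun k => A i k + B k j) (mem_univ k₀))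
      (le_sup (f := fun k => A i k + B k j) (mem_univ k₁)))
  by_cases hk₀ : k = k₀
  · rw [hk₀]
    exact le_max_left _ _
  by_cases hk₁ : k = k₁
  · rw [hk₁]
    exact le_max_right _ _
  rw [h k hk₀ hk₁]
  exact bot_le

lemma tropMul_apply_of_forall_ne_eq_bot (A : Matrix (Fin l) (Fin m) (WithBot ℝ))
    {B : Matrix (Fin m) (Fin p) (WithBot ℝ)} {j : Fin p} (k₀ : Fin m)
    (hB : ∀ k, k ≠ k₀ → B k j = ⊥) (i : Fin l) : tropMul A B i j = A i k₀ + B k₀ j :=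
  tropMul_apply_eq_of_forall_ne k₀ fun k hk => by rw [hB k hk, WithBot.add_bot]

lemma tropMul_xDiag_apply (A : Matrix (Fin l) (Fin m) (WithBot ℝ)) (a : ℕ) (s : ℝ)
    (i : Fin l) (j : Fin m) :
    tropMul A (xDiag m a s) i j = A i j + if j.val = a then (s : WithBot ℝ) else 0 := by
  rw [tropMul_apply_of_forall_ne_eq_bot A j (fun k hk => if_neg hk)]
  simp [xDiag]

lemma tropMul_xLow_apply_of_ne (A : Matrix (Fin l) (Fin m) (WithBot ℝ)) {a : ℕ} (s : ℝ)
    (i : Fin l) {j : Fin m} (hj : j.val ≠ a) : tropMul A (xLow m a s) i j = A i j := by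
  rw [tropMul_apply_of_forall_ne_eq_bot A j (fun k hk => by simp [xLow, hk, hj])]
  simp [xLow]

lemma tropMul_xLow_apply_self (A : Matrix (Fin l) (Fin m) (WithBot ℝ)) (s : ℝ) (i : Fin l)
    (j : Fin m) (hj : j.val + 1 < m) :
    tropMul A (xLow m j s) i j = max (A i j) (A i ⟨j + 1, hj⟩ + s) := by
  have hne : (⟨j + 1, hj⟩ : Fin m) ≠ j := Fin.ne_of_val_ne (by simp)
  rw [tropMul_apply_eq_max_of_forall_ne j ⟨j + 1, hj⟩ fun k hk₀ hk₁ => ?_]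
  · simp [xLow, hne]
  · have : k.val ≠ j + 1 := fun h => hk₁ (Fin.ext h)
    simp [xLow, hk₀, this]

end TropicalProduct

section WeightEntries

variable {n : ℕ} (W : Matrix (Fin n) (Fin n) ℝ)

lemma wnat_of_lt {a b : ℕ} (ha : a < n) (hb : b < n) : wnat n W a b = W ⟨a, ha⟩ ⟨b, hb⟩ :=
  dif_pos ⟨ha, hb⟩

@[simp]
lemma wnat_val (i j : Fin n) : wnat n W i j = W i j :=
  wnat_of_lt W i.isLt j.isLt

lemma wnat_transpose (a b : ℕ) : wnat n Wᵀ a b = wnat n W b a := by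
  unfold wnat
  by_cases h : a < n ∧ b < n
  · rw [dif_pos h, dif_pos h.symm, Matrix.transpose_apply]
  · rw [dif_neg h, dif_neg fun h' => h h'.symm]

variable {W}

lemma WeakPara.transpose (hP : WeakPara n W) : WeakPara n Wᵀ :=
  fun i j h => (hP i j h).symm

lemma WeakPara.wnat_le_wnat_succ (hP : WeakPara n W) {r c : ℕ} (hc : c + 2 ≤ r) (hr : r < n) :
    wnat n W r c ≤ wnat n W r (c + 1) := by
  rw [wnat_of_lt W hr (by omega), wnat_of_lt W hr (by omega)]
  exact (hP ⟨r, hr⟩ ⟨c, by omega⟩ hc).1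

lemma WeakTrapeze.wnat_le (hT : WeakTrapeze n W) {k : ℕ} (hk : k + 1 < n) :
    wnat n W (k + 1) k + wnat n W k k + wnat n W k (k + 1) ≤ wnat n W (k + 1) (k + 1) := by
  rw [wnat_of_lt W hk (by omega), wnat_of_lt W (by omega) (by omega),
    wnat_of_lt W (by omega) hk, wnat_of_lt W hk hk]
  exact hT ⟨k + 1, hk⟩ k.succ_pos

end WeightEntries

section DiagonalPart

variable {n : ℕ} (W : Matrix (Fin n) (Fin n) ℝ)

lemma foldl_xDiag_apply (m : ℕ) (i j : Fin n) :
    ((List.range m).map fun a => xDiag n a (wnat n W a a)).foldl tropMul (tropId n) i j =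
      if i = j then (if i.val < m then (W i i : WithBot ℝ) else 0) else ⊥ := by
  induction m with
  | zero => simp [tropId]
  | succ m ih =>
    rw [List.range_succ, List.map_append, List.foldl_append, List.map_singleton,
      List.foldl_cons, List.foldl_nil, tropMul_xDiag_apply, ih]
    by_cases hij : i = j
    · subst hij
      rcases lt_trichotomy i.val m with h | h | h
      · simp [h, h.ne, Nat.lt_succ_of_lt h]
      · simp [← h]
      · simp [h.not_gt, h.ne', show ¬ i.val < m + 1 by omega]
    · simp [hij]

lemma Dmat_apply (i j : Fin n) : Dmat n W i j = if i = j then (W i j : WithBot ℝ) else ⊥ := by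
  rw [Dmat, foldl_xDiag_apply]
  split_ifs with h <;> simp_all

end DiagonalPart

/-- The product of the first `m` groups `⊙_{t=1}^{k} x̄_{n−k+t−1}(W_{n−k+t, t})` of `L(W)`
when the columns of `W` increase below the subdiagonal (`foldl_lowerFactors`). -/
def lowerPartial (n m : ℕ) (W : Matrix (Fin n) (Fin n) ℝ) : Matrix (Fin n) (Fin n) (WithBot ℝ) :=
  fun i k => if i = k then 0
    else if k.val < i.val ∧ n ≤ k.val + m + 1 then
      ((∑ r ∈ Ioc k.val i.val, wnat n W r (k.val + m + 1 - n) : ℝ) : WithBot ℝ)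
    else ⊥

section LowerPart

variable {n : ℕ} {W : Matrix (Fin n) (Fin n) ℝ}

lemma lowerPartial_apply_of_le {m : ℕ} {i k : Fin n} (hki : k.val ≤ i.val)
    (hm : n ≤ k.val + m + 1) :
    lowerPartial n m W i k = ((∑ r ∈ Ioc k.val i.val, wnat n W r (k.val + m + 1 - n) : ℝ) :
      WithBot ℝ) := by
  by_cases hik : i = k
  · simp [lowerPartial, hik]
  · rw [lowerPartial, if_neg hik, if_pos ⟨lt_of_le_of_ne hki fun h => hik (Fin.ext h.symm), hm⟩]

lemma lowerPartial_apply_of_ge (m : ℕ) {i k : Fin n} (hik : i.val ≤ k.val) :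
    lowerPartial n m W i k = if i = k then 0 else ⊥ := by
  unfold lowerPartial
  split_ifs <;> first | rfl | omega

lemma lowerPartial_zero : lowerPartial n 0 W = tropId n := by
  funext i k
  unfold lowerPartial tropId
  split_ifs <;> first | rfl | omega

lemma lowerPartial_succ_apply_of_lt {m : ℕ} (i : Fin n) {j : Fin n} (hj : j.val + m + 2 < n) :
    lowerPartial n (m + 1) W i j = lowerPartial n m W i j := by
  unfold lowerPartial
  split_ifs <;> first | rfl | omega

/-- The `m`-th group puts `W_{j+1, j+m+2-n}` in position `(j+1, j)`, and by column
monotonicity the path leaving column `j` through it beats the old one. -/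
lemma lowerPartial_succ_apply
    (hcol : ∀ r c, c + 2 ≤ r → r < n → wnat n W r c ≤ wnat n W r (c + 1))
    {m : ℕ} (hm : m + 2 ≤ n) (i j : Fin n) (hj : j.val + 1 < n)
    (hjm : n ≤ j.val + m + 2) :
    lowerPartial n (m + 1) W i j = max (lowerPartial n m W i j)
      (lowerPartial n m W i ⟨j + 1, hj⟩ + (wnat n W (j + 1) (j + m + 2 - n) : WithBot ℝ)) := by
  rcases le_or_gt i.val j.val with hij | hji
  · rw [lowerPartial_apply_of_ge m (k := ⟨j + 1, hj⟩) (by simp; omega),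
      if_neg (Fin.ne_of_val_ne (by simp; omega)), WithBot.bot_add, max_bot_right,
      lowerPartial_apply_of_ge _ hij, lowerPartial_apply_of_ge _ hij]
  · have hnext : lowerPartial n m W i ⟨j + 1, hj⟩ =
        ((∑ r ∈ Ioc (j.val + 1) i.val, wnat n W r (j + m + 2 - n) : ℝ) : WithBot ℝ) := by
      rw [lowerPartial_apply_of_le (by simp; omega) (by simp; omega)]
      simp only [show j.val + 1 + m + 1 = j + m + 2 by omega]
    have hsum : ∑ r ∈ Ioc j.val i.val, wnat n W r (j + m + 2 - n) =
        (∑ r ∈ Ioc (j.val + 1) i.val, wnat n W r (j + m + 2 - n)) +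
          wnat n W (j + 1) (j + m + 2 - n) := by
      rw [← sum_Ioc_consecutive _ (Nat.le_succ j.val) hji, Nat.Ioc_succ_singleton,
        sum_singleton, add_comm]
    rw [lowerPartial_apply_of_le hji.le (by omega), hnext, ← WithBot.coe_add, ← hsum,
      show j.val + (m + 1) + 1 - n = j + m + 2 - n by omega, eq_comm, max_eq_right_iff]
    by_cases hjm' : n ≤ j.val + m + 1
    · rw [lowerPartial_apply_of_le hji.le hjm', WithBot.coe_le_coe]
      refine sum_le_sum fun r hr => ?_
      rw [mem_Ioc] at hr
      rw [show j.val + m + 2 - n = j.val + m + 1 - n + 1 by omega]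
      exact hcol r _ (by omega) (by omega)
    · rw [lowerPartial, if_neg (Fin.ne_of_val_ne hji.ne'), if_neg fun h => hjm' h.2]
      exact bot_le

lemma foldl_lowerGroup_apply
    (hcol : ∀ r c, c + 2 ≤ r → r < n → wnat n W r c ≤ wnat n W r (c + 1))
    {m : ℕ} (hm : m + 2 ≤ n) (t : ℕ) (ht : t ≤ m + 1) (i j : Fin n) :
    ((List.range t).map fun u => xLow n (n - m + u - 2) (wnat n W (n - m + u - 1) u)).foldl
        tropMul (lowerPartial n m W) i j =
      if j.val + m + 2 < n + t then lowerPartial n (m + 1) W i j else lowerPartial n m W i j := by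
  induction t generalizing j with
  | zero =>
    split_ifs with hj
    · exact (lowerPartial_succ_apply_of_lt i hj).symm
    · rfl
  | succ t ih =>
    rw [List.range_succ, List.map_append, List.foldl_append, List.map_singleton,
      List.foldl_cons, List.foldl_nil]
    by_cases hj : j.val = n - m + t - 2
    · have hj1 : j.val + 1 < n := by omega
      rw [← hj, tropMul_xLow_apply_self _ _ _ _ hj1, ih (by omega), ih (by omega),
        if_neg (by omega), if_neg (by simp; omega), if_pos (by omega),
        lowerPartial_succ_apply hcol hm i j hj1 (by omega),
        show n - m + t - 1 = j.val + 1 by omega, show t = j.val + m + 2 - n by omega]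
    · rw [tropMul_xLow_apply_of_ne _ _ _ hj, ih (by omega)]
      simp only [show j.val + m + 2 < n + t ↔ j.val + m + 2 < n + (t + 1) by omega]

lemma foldl_lowerFactors
    (hcol : ∀ r c, c + 2 ≤ r → r < n → wnat n W r c ≤ wnat n W r (c + 1))
    (m : ℕ) (hm : m ≤ n - 1) :
    ((List.range m).flatMap fun k => (List.range (k + 1)).map fun t =>
        xLow n (n - k + t - 2) (wnat n W (n - k + t - 1) t)).foldl tropMul (tropId n) =
      lowerPartial n m W := by
  induction m with
  | zero => exact lowerPartial_zero.symm
  | succ m ih =>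
    rw [List.range_succ, List.flatMap_append, List.foldl_append, ih (by omega),
      List.flatMap_singleton]
    funext i j
    rw [foldl_lowerGroup_apply hcol (by omega) _ le_rfl]
    split_ifs with hj
    · rfl
    · rw [lowerPartial_apply_of_ge _ (show i.val ≤ j.val by omega),
        lowerPartial_apply_of_ge _ (show i.val ≤ j.val by omega)]

theorem Lmat_apply
    (hcol : ∀ r c, c + 2 ≤ r → r < n → wnat n W r c ≤ wnat n W r (c + 1))
    (i k : Fin n) :
    Lmat n W i k =
      if k.val ≤ i.val then ((∑ r ∈ Ioc k.val i.val, wnat n W r k : ℝ) : WithBot ℝ) else ⊥ := by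
  rw [Lmat, foldl_lowerFactors hcol (n - 1) le_rfl]
  split_ifs with hki
  · rw [lowerPartial_apply_of_le hki (by omega), show k.val + (n - 1) + 1 - n = k by omega]
  · rw [lowerPartial_apply_of_ge _ (by omega), if_neg (Fin.ne_of_val_ne (by omega))]

end LowerPart

/-- Weight of the path from source `i` down to the diagonal vertex `k` and on to sink `j`. -/
def pathWeight (n : ℕ) (W : Matrix (Fin n) (Fin n) ℝ) (i j k : ℕ) : ℝ :=
  (∑ r ∈ Ioc k i, wnat n W r k) + wnat n W k k + ∑ t ∈ Ioc k j, wnat n W k t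

section TransferMatrix

variable {n : ℕ} {W : Matrix (Fin n) (Fin n) ℝ}

lemma Tmat_apply_eq_sup (hP : WeakPara n W) (i j : Fin n) :
    Tmat n W i j = univ.sup fun k : Fin n =>
      if k.val ≤ i.val ∧ k.val ≤ j.val then (pathWeight n W i j k : WithBot ℝ) else ⊥ := by
  show univ.sup (fun k => tropMul (Lmat n W) (Dmat n W) i k + (Lmat n Wᵀ)ᵀ k j) = _
  refine Finset.sup_congr rfl fun k _ => ?_
  rw [tropMul_apply_of_forall_ne_eq_bot _ k fun k' hk' => by rw [Dmat_apply, if_neg hk'],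
    Dmat_apply, if_pos rfl, Matrix.transpose_apply,
    Lmat_apply fun r c hc hr => hP.wnat_le_wnat_succ hc hr,
    Lmat_apply fun r c hc hr => hP.transpose.wnat_le_wnat_succ hc hr]
  by_cases hki : k.val ≤ i.val
  · by_cases hkj : k.val ≤ j.val
    · simp [hki, hkj, pathWeight, wnat_transpose, WithBot.coe_add]
    · simp [hkj]
  · simp [hki]

lemma pathWeight_le_succ (hT : WeakTrapeze n W) (hP : WeakPara n W) {i j k : ℕ} (hi : i < n)
    (hj : j < n) (hki : k + 1 ≤ i) (hkj : k + 1 ≤ j) :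
    pathWeight n W i j k ≤ pathWeight n W i j (k + 1) := by
  have peel {a : ℕ} (f : ℕ → ℝ) (ha : k < a) :
      ∑ r ∈ Ioc k a, f r = f (k + 1) + ∑ r ∈ Ioc (k + 1) a, f r := by
    rw [← sum_Ioc_consecutive _ (Nat.le_succ k) ha, Nat.Ioc_succ_singleton, sum_singleton]
  have hcol : ∑ r ∈ Ioc (k + 1) i, wnat n W r k ≤ ∑ r ∈ Ioc (k + 1) i, wnat n W r (k + 1) :=
    sum_le_sum fun r hr => hP.wnat_le_wnat_succ (by simp at hr; omega) (by simp at hr; omega)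
  have hrow : ∑ t ∈ Ioc (k + 1) j, wnat n W k t ≤ ∑ t ∈ Ioc (k + 1) j, wnat n W (k + 1) t :=
    sum_le_sum fun t ht => by
      simpa only [wnat_transpose] using hP.transpose.wnat_le_wnat_succ (r := t) (c := k)
        (by simp at ht; omega) (by simp at ht; omega)
  have htrap := hT.wnat_le (k := k) (by omega)
  rw [pathWeight, pathWeight, peel _ hki, peel _ hkj]
  linarith

lemma Tmat_apply_eq_pathWeight (hT : WeakTrapeze n W) (hP : WeakPara n W) (i j : Fin n) :
    Tmat n W i j = (pathWeight n W i j (min i j : Fin n) : WithBot ℝ) := by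
  have hmono : MonotoneOn (pathWeight n W i j) (Set.Iic (min i.val j.val)) :=
    monotoneOn_of_le_succ Set.ordConnected_Iic fun k _ _ hk => by
      rw [Order.succ_eq_add_one] at hk ⊢
      simp only [Set.mem_Iic, le_min_iff] at hk
      exact pathWeight_le_succ hT hP i.isLt j.isLt hk.1 hk.2
  rw [Tmat_apply_eq_sup hP, Fin.coe_min]
  refine le_antisymm (Finset.sup_le fun k _ => ?_) (le_trans ?_ (le_sup (mem_univ (min i j))))
  · split_ifs with hk
    · have hk' : k.val ≤ min i.val j.val := le_min hk.1 hk.2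
      exact WithBot.coe_le_coe.2 (hmono hk' (Set.mem_Iic.2 le_rfl) hk')
    · exact bot_le
  · simp [Fin.coe_min]

end TransferMatrix

section PathMatrix

variable {n : ℕ} (W : Matrix (Fin n) (Fin n) ℝ)

lemma psi_of_le {i j : Fin n} (hij : i ≤ j) :
    psi n W i j = ∑ t ∈ Icc i.val j.val, wnat n W i t := by
  rw [psi, if_pos hij, ← Fin.map_valEmbedding_Icc, sum_map]
  simp

lemma psi_of_ge {i j : Fin n} (hji : j ≤ i) :
    psi n W i j = ∑ t ∈ Icc j.val i.val, wnat n W t j := by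
  by_cases hij : i ≤ j
  · obtain rfl := le_antisymm hij hji
    simp [psi_of_le W hij]
  · rw [psi, if_neg hij, ← Fin.map_valEmbedding_Icc, sum_map]
    simp

theorem phi_psi : phi n (psi n W) = W := by
  funext i j
  unfold phi
  split_ifs with hij hlt
  · subst hij
    simp [psi_of_le W le_rfl]
  · obtain ⟨c, hc⟩ : ∃ c, j.val = c + 1 := ⟨j.val - 1, by omega⟩
    have hpred : (fpred j).val = c := by simp [fpred, hc]
    rw [psi_of_le W hlt.le, psi_of_le W (j := fpred j) (Fin.le_def.2 (by omega)), hpred, hc,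
      sum_Icc_succ_top (by omega), ← hc, wnat_val, add_sub_cancel_left]
  · have hgt : j < i := lt_of_le_of_ne (not_lt.1 hlt) (Ne.symm hij)
    obtain ⟨c, hc⟩ : ∃ c, i.val = c + 1 := ⟨i.val - 1, by omega⟩
    have hpred : (fpred i).val = c := by simp [fpred, hc]
    rw [psi_of_ge W hgt.le, psi_of_ge W (i := fpred i) (Fin.le_def.2 (by omega)), hpred, hc,
      sum_Icc_succ_top (by omega), ← hc, wnat_val, add_sub_cancel_left]

lemma pathWeight_min_eq_psi (i j : Fin n) :
    pathWeight n W i j (min i j : Fin n) = psi n W i j := by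
  rcases le_total i j with hij | hji
  · rw [min_eq_left hij, psi_of_le W hij, ← add_sum_Ioc_eq_sum_Icc (Fin.le_def.1 hij),
      pathWeight, Ioc_self, sum_empty, zero_add]
  · rw [min_eq_right hji, psi_of_ge W hji, ← sum_Ioc_add_eq_sum_Icc (Fin.le_def.1 hji),
      pathWeight, Ioc_self, sum_empty, add_zero]

variable {W}

theorem Tmat_apply (hT : WeakTrapeze n W) (hP : WeakPara n W) (i j : Fin n) :
    Tmat n W i j = (psi n W i j : WithBot ℝ) := by
  rw [Tmat_apply_eq_pathWeight hT hP, pathWeight_min_eq_psi]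

end PathMatrix

/-- uniqueness of the weights satisfying the weak trapeze and
parallelogram inequalities representing a given transfer matrix. -/
theorem weights_unique_of_weak_ineqs (n : ℕ) (W W' : Matrix (Fin n) (Fin n) ℝ)
    (h1 : WeakTrapeze n W) (h2 : WeakPara n W)
    (h1' : WeakTrapeze n W') (h2' : WeakPara n W')
    (h : Tmat n W = Tmat n W') : W = W' := by
  have hpsi : psi n W = psi n W' := by
    funext i j
    have hij := congrFun (congrFun h i) j
    rwa [Tmat_apply h1 h2, Tmat_apply h1' h2', WithBot.coe_inj] at hij
  rw [← phi_psi W, ← phi_psi W', hpsi]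
end
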